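/- arXiv:0906.5176 — 4 statements merged into one kernel-verified Lean document; each statement's English description precedes it below -/
import Mathlib

section
/- Assume d ≥ 2, that the digraphs Γ₂,…,Γ_d are all symmetric, and that m₂,…,m_d are all even. Let D_Γ(m⁻,u) be the matrix with rows and columns indexed by C⁻_Γ(⟨m⁻⟩) := C_{(Γ₂,…,Γ_d)}(⟨m⁻⟩), whose (i,j) entry equals exp((c(i)ᵀu + c(j)ᵀu)/2) if placing configuration i at level x₁ = 1 and configuration j at level x₁ = 2 yields a Γ-allowed coloring of ⟨(2,m⁻)⟩, and 0 otherwise. Then P_Γ(u) ≤ log ρ(D_Γ(m⁻,u))/vol(m⁻), where ρ is the spectral radius. -/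
open Filter Topology Matrix
open scoped Classical

namespace Soft

/-! Basic notions for nearest-neighbour subshifts of finite type (NNSOFT) on `ℤ^d`:
boxes, allowed colorings, color counts, the grand partition function `Z_Γ(m,u)`. -/

/-- The set of sites of the box `⟨m⟩ = [m₁] × ⋯ × [m_d]` (zero-indexed). -/
def box {d : ℕ} (m : Fin d → ℕ) : Set (Fin d → ℕ) := {x | ∀ i, x i < m i}

/-- The site `x + e_k`. -/
def step {d : ℕ} (x : Fin d → ℕ) (k : Fin d) : Fin d → ℕ :=
  Function.update x k (x k + 1)

/-- `vol(m) = m₁ ⋯ m_d`. -/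
def vol {d : ℕ} (m : Fin d → ℕ) : ℕ := ∏ i, m i

/-- `φ` satisfies all nearest-neighbour constraints imposed by `Γ` inside the box `⟨m⟩`:
whenever `x` and `x + e_k` both lie in the box, `(φ x, φ (x + e_k)) ∈ Γ k`. -/
def Allowed {d n : ℕ} (Γ : Fin d → Set (Fin n × Fin n)) (m : Fin d → ℕ)
    (φ : (Fin d → ℕ) → Fin n) : Prop :=
  ∀ x ∈ box m, ∀ k : Fin d, step x k ∈ box m → (φ x, φ (step x k)) ∈ Γ k

/-- `φ` takes the default color `0` outside the box `⟨m⟩`; colorings of `⟨m⟩` are represented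
by functions on all of `ℕ^d` normalized in this way (so that there are finitely many). -/
def Normalized {d n : ℕ} [NeZero n] (m : Fin d → ℕ) (φ : (Fin d → ℕ) → Fin n) : Prop :=
  ∀ x, x ∉ box m → φ x = 0

/-- `C_Γ(⟨m⟩)`: the set of `Γ`-allowed colorings of the box `⟨m⟩`. -/
def Col {d n : ℕ} [NeZero n] (Γ : Fin d → Set (Fin n × Fin n)) (m : Fin d → ℕ) :
    Set ((Fin d → ℕ) → Fin n) :=
  {φ | Allowed Γ m φ ∧ Normalized m φ}

/-- `Γ`-allowed colorings of the whole lattice `ℤ^d`. -/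
def AllowedZ {d n : ℕ} (Γ : Fin d → Set (Fin n × Fin n)) (φ : (Fin d → ℤ) → Fin n) : Prop :=
  ∀ (x : Fin d → ℤ) (k : Fin d), (φ x, φ (Function.update x k (x k + 1))) ∈ Γ k

/-- `c(φ)_j`: the number of sites of `⟨m⟩` colored `j` by `φ`. -/
noncomputable def cnt {d n : ℕ} (m : Fin d → ℕ) (φ : (Fin d → ℕ) → Fin n) (j : Fin n) : ℕ :=
  Nat.card {x : Fin d → ℕ // x ∈ box m ∧ φ x = j}

/-- The weight `exp (c(φ)ᵀ u)` of a coloring `φ` of `⟨m⟩`. -/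
noncomputable def weight {d n : ℕ} (m : Fin d → ℕ) (φ : (Fin d → ℕ) → Fin n)
    (u : Fin n → ℝ) : ℝ :=
  Real.exp (∑ j, (cnt m φ j : ℝ) * u j)

/-- The grand partition function `Z_Γ(m,u) = Σ_{φ ∈ C_Γ(⟨m⟩)} exp (c(φ)ᵀ u)`. -/
noncomputable def Z {d n : ℕ} [NeZero n] (Γ : Fin d → Set (Fin n × Fin n)) (m : Fin d → ℕ)
    (u : Fin n → ℝ) : ℝ :=
  ∑' φ : Col Γ m, weight m φ.1 u

/-- The spectral radius of a real square matrix: the largest modulus of a (complex)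
eigenvalue. -/
noncomputable def specRad {N : Type*} [Fintype N] [DecidableEq N] (M : Matrix N N ℝ) : ℝ :=
  (spectralRadius ℂ (M.map (Complex.ofReal ·))).toReal

/-- There are finitely many (normalized) colorings of a box. -/
instance colFinite {d n : ℕ} [NeZero n] (Γ : Fin d → Set (Fin n × Fin n)) (m : Fin d → ℕ) :
    Finite (Col Γ m) := by
  have hinj : Function.Injective
      (fun (φ : Col Γ m) (x : (i : Fin d) → Fin (m i)) => φ.1 fun i => (x i).1) := by
    rintro ⟨φ, hφ⟩ ⟨ψ, hψ⟩ h
    apply Subtype.ext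
    funext x
    show φ x = ψ x
    by_cases hx : x ∈ box m
    · exact congrFun h (fun i => ⟨x i, hx i⟩)
    · rw [hφ.2 x hx, hψ.2 x hx]
  exact Finite.of_injective _ hinj

noncomputable instance colFintype {d n : ℕ} [NeZero n] (Γ : Fin d → Set (Fin n × Fin n))
    (m : Fin d → ℕ) : Fintype (Col Γ m) :=
  Fintype.ofFinite _

/-- The transfer matrix `D_Γ(m⁻,u)`: rows and columns are indexed by
`C⁻_Γ(⟨m⁻⟩) = C_{(Γ₂,…,Γ_d)}(⟨m⁻⟩)`; the `(i,j)` entry is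
`exp((c(i)ᵀu + c(j)ᵀu)/2)` if placing `i` at level `x₁ = 1` and `j` at level `x₁ = 2`
yields a `Γ`-allowed coloring of `⟨(2,m⁻)⟩` (i.e. `(i x, j x) ∈ Γ₁` for all sites `x`),
and `0` otherwise. -/
noncomputable def levelMat {d n : ℕ} [NeZero n] (Γ : Fin (d + 2) → Set (Fin n × Fin n))
    (mr : Fin (d + 1) → ℕ) (u : Fin n → ℝ) :
    Matrix (Col (fun i : Fin (d + 1) => Γ i.succ) mr)
           (Col (fun i : Fin (d + 1) => Γ i.succ) mr) ℝ :=
  Matrix.of fun φ ψ =>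
    (if ∀ x ∈ box mr, (φ.1 x, ψ.1 x) ∈ Γ 0 then (1 : ℝ) else 0) *
      Real.exp (((∑ j, (cnt mr φ.1 j : ℝ) * u j) + ∑ j, (cnt mr ψ.1 j : ℝ) * u j) / 2)

/-!
Cut the box `⟨(N+1, (N+1)m⁻)⟩` into `(N+1)^(d+1)` translates of the strip `⟨(N+1, m⁻)⟩`.
Forgetting the constraints between different translates shows that `Z` of the box is at most
`Z(strip)^((N+1)^(d+1))`, so the pressure is bounded by `log Z(strip) / ((N+1) vol(m⁻))`.
Read layer by layer along the first axis, an allowed coloring of the strip is a path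
`p₀, …, p_N` in `C⁻_Γ(⟨m⁻⟩)`, and splitting each layer's weight evenly between its two
neighbouring transitions writes its weight as `v(p₀) ∏ D(p_t, p_{t+1}) v(p_N)` with
`v = exp(c(·)ᵀu / 2)`. Hence `Z(strip) ≤ vᵀ D^N v`, which Gelfand's formula bounds by `C r^N`
for every `r > ρ(D)`; letting `N → ∞` and then `r ↓ ρ(D)` gives the claim.
-/

section Energy

variable {d n : ℕ}

noncomputable def energy (m : Fin d → ℕ) (φ : (Fin d → ℕ) → Fin n) (u : Fin n → ℝ) : ℝ :=
  ∑ y : (i : Fin d) → Fin (m i), u (φ fun i => y i)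

lemma cnt_eq_card (m : Fin d → ℕ) (φ : (Fin d → ℕ) → Fin n) (j : Fin n) :
    cnt m φ j = Fintype.card {y : (i : Fin d) → Fin (m i) // φ (fun i => y i) = j} := by
  rw [cnt, ← Nat.card_eq_fintype_card]
  exact Nat.card_congr
    { toFun x := ⟨fun i => ⟨x.1 i, x.2.1 i⟩, x.2.2⟩
      invFun y := ⟨fun i => y.1 i, fun i => (y.1 i).2, y.2⟩
      left_inv _ := rfl
      right_inv _ := rfl }

lemma sum_cnt_mul_eq_energy (m : Fin d → ℕ) (φ : (Fin d → ℕ) → Fin n) (u : Fin n → ℝ) :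
    ∑ j, (cnt m φ j : ℝ) * u j = energy m φ u := by
  rw [energy,
    ← Finset.sum_fiberwise Finset.univ fun y : (i : Fin d) → Fin (m i) => φ fun i => y i]
  refine Finset.sum_congr rfl fun j _ => ?_
  rw [Finset.sum_congr rfl fun y hy => congrArg u (Finset.mem_filter.1 hy).2, Finset.sum_const,
    nsmul_eq_mul, cnt_eq_card, Fintype.card_subtype]

lemma weight_eq_exp_energy (m : Fin d → ℕ) (φ : (Fin d → ℕ) → Fin n) (u : Fin n → ℝ) :
    weight m φ u = Real.exp (energy m φ u) := by
  rw [weight, sum_cnt_mul_eq_energy]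

end Energy

section PartitionFunction

variable {d n : ℕ} [NeZero n] {Γ : Fin d → Set (Fin n × Fin n)}

lemma Z_eq_sum (Γ : Fin d → Set (Fin n × Fin n)) (m : Fin d → ℕ) (u : Fin n → ℝ) :
    Z Γ m u = ∑ φ : Col Γ m, weight m φ.1 u :=
  tsum_fintype _

lemma AllowedZ.restrict_mem_Col {φ : (Fin d → ℤ) → Fin n} (hφ : AllowedZ Γ φ) (m : Fin d → ℕ) :
    (fun x => if x ∈ box m then φ (fun i => (x i : ℤ)) else 0) ∈ Col Γ m := by
  refine ⟨fun x hx k hxk => ?_, fun x hx => if_neg hx⟩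
  simp only [if_pos hx, if_pos hxk]
  convert hφ (fun i => (x i : ℤ)) k using 3
  ext i
  rcases eq_or_ne i k with rfl | h
  · simp [step]
  · simp [step, Function.update_of_ne h]

lemma Z_pos (hne : ∃ φ : (Fin d → ℤ) → Fin n, AllowedZ Γ φ) (m : Fin d → ℕ) (u : Fin n → ℝ) :
    0 < Z Γ m u := by
  obtain ⟨φ, hφ⟩ := hne
  have : Nonempty (Col Γ m) := ⟨⟨_, hφ.restrict_mem_Col m⟩⟩
  rw [Z_eq_sum]
  exact Finset.sum_pos (fun _ _ => Real.exp_pos _) Finset.univ_nonempty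

lemma sum_comp_le_sum_of_injective {α β : Type*} [Fintype α] [Fintype β] {f : α → β}
    (hf : Function.Injective f) {g : β → ℝ} (hg : ∀ b, 0 ≤ g b) :
    ∑ a, g (f a) ≤ ∑ b, g b := by
  classical
  rw [← Finset.sum_image hf.injOn]
  exact Finset.sum_le_sum_of_subset_of_nonneg (Finset.subset_univ _) fun b _ _ => hg b

lemma Z_le_sum_of_injective {Y : Type*} [Fintype Y] {m : Fin d → ℕ} {u : Fin n → ℝ}
    {F : Col Γ m → Y} (hF : Function.Injective F) {g : Y → ℝ} (hg : ∀ y, 0 ≤ g y)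
    (hweight : ∀ φ, weight m φ.1 u = g (F φ)) :
    Z Γ m u ≤ ∑ y, g y := by
  rw [Z_eq_sum, Finset.sum_congr rfl fun φ _ => hweight φ]
  exact sum_comp_le_sum_of_injective hF hg

end PartitionFunction

section Blocks

variable {d n : ℕ} [NeZero n] {Γ : Fin d → Set (Fin n × Fin n)}

lemma step_add (x a : Fin d → ℕ) (k : Fin d) : step x k + a = step (x + a) k := by
  ext i
  rcases eq_or_ne i k with rfl | h
  · simp only [step, Pi.add_apply, Function.update_self]
    omega
  · simp [step, Function.update_of_ne h]

noncomputable def restrictBox (k a : Fin d → ℕ) (φ : (Fin d → ℕ) → Fin n) :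
    (Fin d → ℕ) → Fin n :=
  fun y => if y ∈ box k then φ (y + a) else 0

lemma restrictBox_of_mem {k a y : Fin d → ℕ} (φ : (Fin d → ℕ) → Fin n) (hy : y ∈ box k) :
    restrictBox k a φ y = φ (y + a) :=
  if_pos hy

lemma restrictBox_mem_Col {m k a : Fin d → ℕ} {φ : (Fin d → ℕ) → Fin n} (hφ : φ ∈ Col Γ m)
    (ha : ∀ i, a i + k i ≤ m i) : restrictBox k a φ ∈ Col Γ k := by
  have hbox : ∀ y ∈ box k, y + a ∈ box m := fun y hy i => by
    have := hy i
    have := ha i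
    simp only [Pi.add_apply]
    omega
  refine ⟨fun y hy i hyi => ?_, fun y hy => if_neg hy⟩
  rw [restrictBox_of_mem φ hy, restrictBox_of_mem φ hyi, step_add]
  exact hφ.1 _ (hbox y hy) i (step_add y a i ▸ hbox _ hyi)

/-- `(b, y)` is sent to the site `y + k * b`, i.e. the site `y` of the `b`-th block. -/
def blockEquiv (s k : Fin d → ℕ) :
    ((i : Fin d) → Fin (s i)) × ((i : Fin d) → Fin (k i)) ≃ ((i : Fin d) → Fin (s i * k i)) :=
  (Equiv.arrowProdEquivProdArrow _ _ _).symm.trans (Equiv.piCongrRight fun _ => finProdFinEquiv)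

lemma energy_mul_eq_sum (s k : Fin d → ℕ) (φ : (Fin d → ℕ) → Fin n) (u : Fin n → ℝ) :
    energy (fun i => s i * k i) φ u =
      ∑ b : (i : Fin d) → Fin (s i), energy k (restrictBox k (fun i => k i * b i) φ) u := by
  rw [energy, ← (blockEquiv s k).sum_comp, Fintype.sum_prod_type]
  refine Finset.sum_congr rfl fun b _ => Finset.sum_congr rfl fun y _ => ?_
  rw [restrictBox_of_mem φ fun i => (y i).2]
  rfl

lemma restrictBox_injective {s k : Fin d → ℕ} {φ ψ : (Fin d → ℕ) → Fin n}
    (hφ : φ ∈ Col Γ (fun i => s i * k i)) (hψ : ψ ∈ Col Γ (fun i => s i * k i))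
    (h : ∀ b : (i : Fin d) → Fin (s i),
      restrictBox k (fun i => k i * b i) φ = restrictBox k (fun i => k i * b i) ψ) :
    φ = ψ := by
  ext1 x
  by_cases hx : x ∈ box fun i => s i * k i
  · obtain ⟨⟨b, y⟩, hby⟩ := (blockEquiv s k).surjective fun i => ⟨x i, hx i⟩
    have hx' : (fun i => (y i : ℕ)) + (fun i => k i * b i) = x := by
      ext i
      exact congrArg Fin.val (congrFun hby i)
    have := congrFun (h b) fun i => y i
    rwa [restrictBox_of_mem φ fun i => (y i).2, restrictBox_of_mem ψ fun i => (y i).2, hx']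
      at this
  · rw [hφ.2 x hx, hψ.2 x hx]

lemma Z_mul_le_pow (Γ : Fin d → Set (Fin n × Fin n)) (s k : Fin d → ℕ) (u : Fin n → ℝ) :
    Z Γ (fun i => s i * k i) u ≤ Z Γ k u ^ vol s := by
  have hblock : ∀ b : (i : Fin d) → Fin (s i),
      (fun i => k i * b i) + k ≤ fun i => s i * k i := fun b i => by
    have := (b i).2
    simp only [Pi.add_apply]
    nlinarith
  calc Z Γ (fun i => s i * k i) u
      ≤ ∑ G : ((i : Fin d) → Fin (s i)) → Col Γ k, ∏ b, weight k (G b).1 u := by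
        refine Z_le_sum_of_injective
          (F := fun φ b => ⟨_, restrictBox_mem_Col φ.2 (hblock b)⟩)
          (fun φ ψ h => Subtype.ext (restrictBox_injective φ.2 ψ.2 fun b =>
            congrArg Subtype.val (congrFun h b)))
          (fun G => Finset.prod_nonneg fun b _ => (Real.exp_pos _).le) fun φ => ?_
        simp only [weight_eq_exp_energy, energy_mul_eq_sum, Real.exp_sum]
    _ = Z Γ k u ^ vol s := by
        rw [← Fintype.prod_sum fun (_ : (i : Fin d) → Fin (s i)) (ψ : Col Γ k) => weight k ψ.1 u,
          Finset.prod_const, ← Z_eq_sum, Finset.card_univ, Fintype.card_pi]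
        simp only [Fintype.card_fin, vol]

end Blocks

section Layers

variable {d n : ℕ} [NeZero n] {Γ : Fin (d + 1) → Set (Fin n × Fin n)}

noncomputable def layer (k : Fin d → ℕ) (φ : (Fin (d + 1) → ℕ) → Fin n) (t : ℕ) :
    (Fin d → ℕ) → Fin n :=
  fun y => if y ∈ box k then φ (Fin.cons t y) else 0

lemma layer_of_mem {k y : Fin d → ℕ} (φ : (Fin (d + 1) → ℕ) → Fin n) (t : ℕ) (hy : y ∈ box k) :
    layer k φ t y = φ (Fin.cons t y) :=
  if_pos hy

lemma cons_mem_box {M t : ℕ} {k y : Fin d → ℕ} :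
    (Fin.cons t y : Fin (d + 1) → ℕ) ∈ box (Fin.cons M k : Fin (d + 1) → ℕ) ↔
      t < M ∧ y ∈ box k :=
  Fin.forall_fin_succ

lemma step_cons_succ (t : ℕ) (y : Fin d → ℕ) (i : Fin d) :
    step (Fin.cons t y : Fin (d + 1) → ℕ) i.succ = Fin.cons t (step y i) := by
  simp [step, Fin.cons_update]

lemma step_cons_zero (t : ℕ) (y : Fin d → ℕ) :
    step (Fin.cons t y : Fin (d + 1) → ℕ) 0 = Fin.cons (t + 1) y := by
  simp [step, Fin.update_cons_zero]

variable {M : ℕ} {k : Fin d → ℕ} {φ : (Fin (d + 1) → ℕ) → Fin n}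

lemma layer_mem_Col (hφ : φ ∈ Col Γ (Fin.cons M k)) {t : ℕ} (ht : t < M) :
    layer k φ t ∈ Col (fun i => Γ i.succ) k := by
  refine ⟨fun y hy i hyi => ?_, fun y hy => if_neg hy⟩
  rw [layer_of_mem φ t hy, layer_of_mem φ t hyi, ← step_cons_succ]
  refine hφ.1 _ (cons_mem_box.2 ⟨ht, hy⟩) i.succ ?_
  rw [step_cons_succ]
  exact cons_mem_box.2 ⟨ht, hyi⟩

lemma layer_adj (hφ : φ ∈ Col Γ (Fin.cons M k)) {t : ℕ} (ht : t + 1 < M) {y : Fin d → ℕ}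
    (hy : y ∈ box k) : (layer k φ t y, layer k φ (t + 1) y) ∈ Γ 0 := by
  rw [layer_of_mem φ t hy, layer_of_mem φ (t + 1) hy, ← step_cons_zero]
  refine hφ.1 _ (cons_mem_box.2 ⟨by omega, hy⟩) 0 ?_
  rw [step_cons_zero]
  exact cons_mem_box.2 ⟨ht, hy⟩

lemma energy_cons_eq_sum (M : ℕ) (k : Fin d → ℕ) (φ : (Fin (d + 1) → ℕ) → Fin n)
    (u : Fin n → ℝ) :
    energy (Fin.cons M k) φ u = ∑ t : Fin M, energy k (layer k φ t) u := by
  rw [energy, ← (Fin.consEquiv fun i => Fin ((Fin.cons M k : Fin (d + 1) → ℕ) i)).sum_comp,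
    Fintype.sum_prod_type]
  refine Finset.sum_congr rfl fun t _ => Finset.sum_congr rfl fun y _ => ?_
  refine congrArg u (Eq.symm ((layer_of_mem (k := k) φ t fun i => (y i).2).trans ?_))
  congr 1
  ext i
  cases i using Fin.cases <;> rfl

lemma layer_injective {ψ : (Fin (d + 1) → ℕ) → Fin n} (hφ : φ ∈ Col Γ (Fin.cons M k))
    (hψ : ψ ∈ Col Γ (Fin.cons M k)) (h : ∀ t : Fin M, layer k φ t = layer k ψ t) : φ = ψ := by
  ext1 x
  by_cases hx : x ∈ box (Fin.cons M k)
  · rw [← Fin.cons_self_tail x] at hx ⊢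
    obtain ⟨ht, hy⟩ := cons_mem_box.1 hx
    have := congrFun (h ⟨x 0, ht⟩) (Fin.tail x)
    rwa [layer_of_mem φ _ hy, layer_of_mem ψ _ hy] at this
  · rw [hφ.2 x hx, hψ.2 x hx]

end Layers

lemma sum_path_prod_eq_dotProduct_pow_mulVec {ι R : Type*} [Fintype ι] [DecidableEq ι]
    [CommSemiring R] (D : Matrix ι ι R) (g : ι → R) (N : ℕ) (f : ι → R) :
    ∑ p : Fin (N + 1) → ι,
        f (p 0) * (∏ t : Fin N, D (p t.castSucc) (p t.succ)) * g (p (Fin.last N)) =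
      f ⬝ᵥ (D ^ N *ᵥ g) := by
  induction N generalizing f with
  | zero =>
    rw [← (Equiv.funUnique (Fin 1) ι).symm.sum_comp]
    simp [dotProduct]
  | succ N ih =>
    have hcons : ∀ a (q : Fin (N + 1) → ι),
        f a * (∏ t : Fin (N + 1), D ((Fin.cons a q : Fin (N + 2) → ι) t.castSucc)
          ((Fin.cons a q : Fin (N + 2) → ι) t.succ)) *
          g ((Fin.cons a q : Fin (N + 2) → ι) (Fin.last (N + 1)))
        = (fun i => f a * D a i) (q 0) * (∏ t : Fin N, D (q t.castSucc) (q t.succ)) *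
          g (q (Fin.last N)) := fun a q => by
      rw [Fin.prod_univ_succ, ← Fin.succ_last]
      simp only [Fin.cons_zero, Fin.cons_succ, Fin.castSucc_zero, ← Fin.succ_castSucc]
      ring
    rw [← (Fin.consEquiv fun _ => ι).sum_comp, Fintype.sum_prod_type]
    simp only [Fin.consEquiv_apply, Fin.cons_zero, hcons]
    rw [Finset.sum_congr rfl fun a _ => ih fun i => f a * D a i, pow_succ', ← mulVec_mulVec]
    simp only [dotProduct, mulVec, Finset.mul_sum, mul_assoc]

section SpectralRadius

variable {A : Type*} [NormedRing A] [NormedAlgebra ℂ A] [CompleteSpace A]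

lemma spectralRadius_ne_top (a : A) : spectralRadius ℂ a ≠ ⊤ := by
  refine ne_top_of_le_ne_top ?_ (spectrum.spectralRadius_le_pow_nnnorm_pow_one_div ℂ a 0)
  exact ENNReal.mul_ne_top (ENNReal.rpow_ne_top_of_nonneg (by positivity) ENNReal.coe_ne_top)
    (ENNReal.rpow_ne_top_of_nonneg (by positivity) ENNReal.coe_ne_top)

lemma eventually_norm_pow_le_pow (a : A) {r : ℝ} (hr : (spectralRadius ℂ a).toReal < r) :
    ∀ᶠ N : ℕ in atTop, ‖a ^ N‖ ≤ r ^ N := by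
  have hlt := (ENNReal.lt_ofReal_iff_toReal_lt (spectralRadius_ne_top a)).2 hr
  filter_upwards [(spectrum.pow_norm_pow_one_div_tendsto_nhds_spectralRadius a).eventually_lt_const
      hlt, eventually_ne_atTop 0] with N hN hN0
  have hroot : ‖a ^ N‖ ^ (1 / N : ℝ) < r := (ENNReal.ofReal_lt_ofReal_iff'.1 hN).1
  calc ‖a ^ N‖ = (‖a ^ N‖ ^ (1 / N : ℝ)) ^ N := by
        rw [one_div, Real.rpow_inv_natCast_pow (norm_nonneg _) hN0]
    _ ≤ r ^ N := pow_le_pow_left₀ (by positivity) hroot.le N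

end SpectralRadius

section MatrixPowers

attribute [local instance] Matrix.linftyOpNormedRing Matrix.linftyOpNormedAlgebra

lemma norm_apply_le_linfty_opNorm {ι : Type*} [Fintype ι] (A : Matrix ι ι ℂ) (i j : ι) :
    ‖A i j‖ ≤ ‖A‖ := by
  rw [linfty_opNorm_def]
  exact_mod_cast (Finset.single_le_sum (fun _ _ => zero_le) (Finset.mem_univ j)).trans
    (Finset.le_sup (f := fun i => ∑ j, ‖A i j‖₊) (Finset.mem_univ i))

lemma eventually_abs_pow_apply_le {ι : Type*} [Fintype ι] [DecidableEq ι] (D : Matrix ι ι ℝ)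
    {r : ℝ} (hr : specRad D < r) : ∀ᶠ N : ℕ in atTop, ∀ i j, |(D ^ N) i j| ≤ r ^ N := by
  filter_upwards [eventually_norm_pow_le_pow (D.map (Complex.ofReal ·)) hr] with N hN i j
  have hpow : D.map (Complex.ofReal ·) ^ N = (D ^ N).map Complex.ofRealHom :=
    (Matrix.map_pow D Complex.ofRealHom N).symm
  calc |(D ^ N) i j| = ‖(D.map (Complex.ofReal ·) ^ N) i j‖ := by
        rw [hpow, map_apply, Complex.ofRealHom_eq_coe, Complex.norm_real, Real.norm_eq_abs]
    _ ≤ r ^ N := (norm_apply_le_linfty_opNorm _ i j).trans hN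

end MatrixPowers

lemma sum_half_add_half (M : ℕ) (g : Fin (M + 1) → ℝ) :
    g 0 / 2 + ∑ t : Fin M, (g t.castSucc + g t.succ) / 2 + g (Fin.last M) / 2 = ∑ t, g t := by
  have hcs := Fin.sum_univ_castSucc g
  have hs := Fin.sum_univ_succ g
  rw [← Finset.sum_div, Finset.sum_add_distrib]
  linarith

section Transfer

variable {d n : ℕ} [NeZero n] (Γ : Fin (d + 2) → Set (Fin n × Fin n)) (mr : Fin (d + 1) → ℕ)
  (u : Fin n → ℝ)

lemma levelMat_apply (φ ψ : Col (fun i : Fin (d + 1) => Γ i.succ) mr) :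
    levelMat Γ mr u φ ψ = (if ∀ x ∈ box mr, (φ.1 x, ψ.1 x) ∈ Γ 0 then 1 else 0) *
      Real.exp ((energy mr φ.1 u + energy mr ψ.1 u) / 2) := by
  simp only [levelMat, of_apply, sum_cnt_mul_eq_energy]

lemma levelMat_nonneg (φ ψ : Col (fun i : Fin (d + 1) => Γ i.succ) mr) :
    0 ≤ levelMat Γ mr u φ ψ := by
  rw [levelMat_apply]
  split_ifs <;> positivity

noncomputable def halfWeight : Col (fun i : Fin (d + 1) => Γ i.succ) mr → ℝ :=
  fun ψ => Real.exp (energy mr ψ.1 u / 2)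

lemma Z_cons_le_dotProduct_pow_mulVec (N : ℕ) :
    Z Γ (Fin.cons (N + 1) mr : Fin (d + 2) → ℕ) u ≤
      halfWeight Γ mr u ⬝ᵥ (levelMat Γ mr u ^ N *ᵥ halfWeight Γ mr u) := by
  rw [← sum_path_prod_eq_dotProduct_pow_mulVec]
  refine Z_le_sum_of_injective (F := fun φ t => ⟨layer mr φ.1 t, layer_mem_Col φ.2 t.2⟩)
    (fun φ ψ h => Subtype.ext (layer_injective φ.2 ψ.2 fun t =>
      congrArg Subtype.val (congrFun h t)))
    (fun p => mul_nonneg (mul_nonneg (Real.exp_pos _).le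
      (Finset.prod_nonneg fun t _ => levelMat_nonneg Γ mr u _ _)) (Real.exp_pos _).le)
    fun φ => ?_
  have hadj : ∀ t : Fin N, levelMat Γ mr u ⟨_, layer_mem_Col φ.2 t.castSucc.2⟩
      ⟨_, layer_mem_Col φ.2 t.succ.2⟩ = Real.exp ((energy mr (layer mr φ.1 t.castSucc) u +
        energy mr (layer mr φ.1 t.succ) u) / 2) := fun t => by
    rw [levelMat_apply, if_pos, one_mul]
    exact fun y hy => layer_adj (t := t) φ.2 (by omega) hy
  simp only [halfWeight, hadj, weight_eq_exp_energy, energy_cons_eq_sum, ← Real.exp_sum,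
    ← Real.exp_add]
  exact congrArg Real.exp (sum_half_add_half N fun t => energy mr (layer mr φ.1 t) u).symm

lemma Z_cons_le_of_specRad_lt {r : ℝ} (hr : specRad (levelMat Γ mr u) < r) :
    ∃ C, ∀ᶠ N : ℕ in atTop, Z Γ (Fin.cons (N + 1) mr : Fin (d + 2) → ℕ) u ≤ C * r ^ N := by
  set v := halfWeight Γ mr u
  have hv : ∀ ψ, 0 ≤ v ψ := fun ψ => (Real.exp_pos _).le
  refine ⟨(∑ ψ, v ψ) ^ 2, ?_⟩
  filter_upwards [eventually_abs_pow_apply_le _ hr] with N hN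
  refine (Z_cons_le_dotProduct_pow_mulVec Γ mr u N).trans ?_
  calc v ⬝ᵥ (levelMat Γ mr u ^ N *ᵥ v)
      = ∑ φ, v φ * ∑ ψ, (levelMat Γ mr u ^ N) φ ψ * v ψ := rfl
    _ ≤ ∑ φ, v φ * ∑ ψ, r ^ N * v ψ := by
        gcongr with φ _ ψ _
        · exact hv φ
        · exact hv ψ
        · exact (le_abs_self _).trans (hN φ ψ)
    _ = (∑ ψ, v ψ) ^ 2 * r ^ N := by
        rw [← Finset.mul_sum, ← Finset.sum_mul, sq]
        ring

end Transfer

lemma vol_pos {d : ℕ} {m : Fin d → ℕ} (hm : ∀ i, 0 < m i) : 0 < vol m :=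
  Finset.prod_pos fun i _ => hm i

lemma vol_mul {d : ℕ} (s k : Fin d → ℕ) : vol (fun i => s i * k i) = vol s * vol k :=
  Finset.prod_mul_distrib

lemma log_Z_mul_div_vol_le {d n : ℕ} [NeZero n] {Γ : Fin d → Set (Fin n × Fin n)}
    {s k : Fin d → ℕ} {u : Fin n → ℝ} (hZ : 0 < Z Γ (fun i => s i * k i) u) (hs : ∀ i, 0 < s i) :
    Real.log (Z Γ (fun i => s i * k i) u) / vol (fun i => s i * k i) ≤
      Real.log (Z Γ k u) / vol k := by
  calc Real.log (Z Γ (fun i => s i * k i) u) / vol (fun i => s i * k i)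
      ≤ (vol s * Real.log (Z Γ k u)) / (vol s * vol k) := by
        rw [vol_mul, Nat.cast_mul, ← Real.log_pow]
        exact div_le_div_of_nonneg_right (Real.log_le_log hZ (Z_mul_le_pow Γ s k u))
          (by positivity)
    _ = Real.log (Z Γ k u) / vol k := mul_div_mul_left _ _ (by exact_mod_cast (vol_pos hs).ne')

/-- At `ρ = 0` the hypothesis is contradictory, so the junk value `log 0 = 0` does no harm. -/
lemma le_log_of_forall_lt_le_log {x ρ : ℝ} (hρ : 0 ≤ ρ) (h : ∀ r, ρ < r → x ≤ Real.log r) :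
    x ≤ Real.log ρ := by
  by_contra! hlt
  obtain ⟨c, hρc, hcx⟩ := exists_between hlt
  have hρexp : ρ < Real.exp c := by
    rcases hρ.eq_or_lt with rfl | hρ
    · exact Real.exp_pos c
    · exact (Real.log_lt_iff_lt_exp hρ).1 hρc
  have := h _ hρexp
  rw [Real.log_exp] at this
  linarith

section Pressure

variable {d n : ℕ} [NeZero n] {Γ : Fin (d + 2) → Set (Fin n × Fin n)} {mr : Fin (d + 1) → ℕ}
  {u : Fin n → ℝ}

lemma tendsto_stacked_strips (hpos : ∀ i, 0 < mr i) :
    Tendsto (fun N : ℕ => fun i => (Fin.cons 1 fun _ => N + 1 : Fin (d + 2) → ℕ) i *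
      (Fin.cons (N + 1) mr : Fin (d + 2) → ℕ) i) atTop atTop := by
  refine tendsto_atTop.2 fun b => ?_
  filter_upwards [eventually_ge_atTop (Finset.univ.sup b)] with N hN i
  have hb : b i ≤ N := (Finset.le_sup (f := b) (Finset.mem_univ i)).trans hN
  cases i using Fin.cases with
  | zero =>
    simp only [Fin.cons_zero, one_mul]
    omega
  | succ j =>
    simp only [Fin.cons_succ]
    nlinarith [hpos j]

lemma pressure_le_of_Z_cons_le (hne : ∃ φ : (Fin (d + 2) → ℤ) → Fin n, AllowedZ Γ φ) {P : ℝ}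
    (hP : Tendsto (fun m : Fin (d + 2) → ℕ => Real.log (Z Γ m u) / (vol m : ℝ)) atTop (𝓝 P))
    (hpos : ∀ i, 0 < mr i) {C r : ℝ} (hr : 0 < r)
    (hZ : ∀ᶠ N : ℕ in atTop, Z Γ (Fin.cons (N + 1) mr : Fin (d + 2) → ℕ) u ≤ C * r ^ N) :
    P ≤ Real.log r / vol mr := by
  have hV : (0 : ℝ) < vol mr := mod_cast vol_pos hpos
  have hlim : Tendsto (fun N : ℕ => Real.log r / vol mr +
      (Real.log C - Real.log r) / vol mr * (1 / ((N : ℝ) + 1))) atTop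
      (𝓝 (Real.log r / vol mr)) := by
    simpa using tendsto_const_nhds.add (tendsto_one_div_add_atTop_nhds_zero_nat.const_mul
      ((Real.log C - Real.log r) / vol mr))
  refine le_of_tendsto_of_tendsto (hP.comp (tendsto_stacked_strips hpos)) hlim ?_
  filter_upwards [hZ] with N hN
  have hZN : 0 < Z Γ (Fin.cons (N + 1) mr : Fin (d + 2) → ℕ) u := Z_pos hne _ u
  have hC : 0 < C := (pos_iff_pos_of_mul_pos (hZN.trans_le hN)).2 (pow_pos hr N)
  have hlog : Real.log (Z Γ (Fin.cons (N + 1) mr : Fin (d + 2) → ℕ) u) ≤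
      Real.log C + N * Real.log r := by
    rw [← Real.log_pow, ← Real.log_mul hC.ne' (pow_pos hr N).ne']
    exact Real.log_le_log hZN hN
  have hvol : (vol (Fin.cons (N + 1) mr : Fin (d + 2) → ℕ) : ℝ) = (N + 1) * vol mr := by
    simp [vol, Fin.prod_univ_succ]
  refine (log_Z_mul_div_vol_le (Z_pos hne _ u) fun i => ?_).trans ?_
  · cases i using Fin.cases <;> simp
  rw [hvol, div_le_iff₀ (by positivity)]
  refine hlog.trans (le_of_eq ?_)
  field_simp
  ring

end Pressure

theorem pressure_le_log_specRad_transfer_general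
    (d n : ℕ) [NeZero n]
    (Γ : Fin (d + 2) → Set (Fin n × Fin n))
    (hne : ∃ φ : (Fin (d + 2) → ℤ) → Fin n, AllowedZ Γ φ)
    (P : (Fin n → ℝ) → ℝ)
    (hP : ∀ u, Tendsto (fun m : Fin (d + 2) → ℕ =>
        Real.log (Z Γ m u) / (vol m : ℝ)) atTop (𝓝 (P u)))
    (mr : Fin (d + 1) → ℕ) (hpos : ∀ i, 0 < mr i)
    (u : Fin n → ℝ) :
    P u ≤ Real.log (specRad (levelMat Γ mr u)) / (vol mr : ℝ) := by
  have hvol : (0 : ℝ) < vol mr := mod_cast vol_pos hpos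
  rw [le_div_iff₀ hvol]
  refine le_log_of_forall_lt_le_log ENNReal.toReal_nonneg fun r hr => ?_
  obtain ⟨C, hC⟩ := Z_cons_le_of_specRad_lt Γ mr u hr
  rw [← le_div_iff₀ hvol]
  exact pressure_le_of_Z_cons_le hne (hP u) hpos (ENNReal.toReal_nonneg.trans_lt hr) hC

/-- Assume `d ≥ 2` (formalized as total dimension `d + 2`), the digraphs
`Γ₂,…,Γ_d` all symmetric and `m₂,…,m_d` all even.  Then
`P_Γ(u) ≤ log ρ(D_Γ(m⁻,u)) / vol(m⁻)`. -/
theorem pressure_le_log_specRad_transfer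
    (d n : ℕ) [NeZero n]
    (Γ : Fin (d + 2) → Set (Fin n × Fin n))
    (hne : ∃ φ : (Fin (d + 2) → ℤ) → Fin n, AllowedZ Γ φ)
    (hsym : ∀ k : Fin (d + 1), ∀ a b : Fin n, (a, b) ∈ Γ k.succ → (b, a) ∈ Γ k.succ)
    (P : (Fin n → ℝ) → ℝ)
    (hP : ∀ u, Tendsto (fun m : Fin (d + 2) → ℕ =>
        Real.log (Z Γ m u) / (vol m : ℝ)) atTop (𝓝 (P u)))
    (mr : Fin (d + 1) → ℕ) (hpos : ∀ i, 0 < mr i) (heven : ∀ i, Even (mr i))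
    (u : Fin n → ℝ) :
    P u ≤ Real.log (specRad (levelMat Γ mr u)) / (vol mr : ℝ) :=
  pressure_le_log_specRad_transfer_general d n Γ hne P hP mr hpos u

end Soft
end

section
/- Let f be a proper closed convex function on ℝ^m. Then ∂f(ℝ^m) is exactly the set of points at which the conjugate f* is subdifferentiable. In particular ri(dom f*) ⊆ ∂f(ℝ^m) ⊆ dom f*, and the closure of ∂f(ℝ^m) equals the closure of dom f*. -/
/-!
If `y ∈ ∂f(x)`, the Fenchel–Young inequality `xᵀy ≤ f(x) + f*(y)` is an equality, which makes `x` a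
subgradient of `f*` at `y`. Conversely, `x ∈ ∂f*(y)` gives `y ∈ ∂f**(x)`, and `f** = f` for a
closed proper convex `f` (Fenchel–Moreau): a point strictly below the closed convex epigraph is
strictly separated from it by a hyperplane, and a vertical separating hyperplane is tilted by an
affine minorant. A convex function is subdifferentiable at relative interior points of its domain:
in the affine span such a point is interior, so the epigraph has interior points above it, and the
supporting hyperplane of the epigraph at `(y, f*(y))` cannot be vertical. Finally the relative
interior of the convex set `dom f*` is dense in it, so the closures agree.
-/

open Filter Topology

namespace Soft

/-- `y` is a subgradient at `x` of the extended-real-valued function `f`: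
`f(z) ≥ f(x) + yᵀ(z−x)` for all `z`. -/
def ESubgrad {m : ℕ} (f : (Fin m → ℝ) → EReal) (x y : Fin m → ℝ) : Prop :=
  ∀ z, f x + (((∑ i, y i * (z i - x i)) : ℝ) : EReal) ≤ f z

/-- The conjugate function `f*(y) = sup_x (xᵀy − f(x))`. -/
noncomputable def econj {m : ℕ} (f : (Fin m → ℝ) → EReal) (y : Fin m → ℝ) : EReal :=
  ⨆ x : Fin m → ℝ, (((∑ i, x i * y i) : ℝ) : EReal) - f x

open Set Matrix

def epigraph {E : Type*} (f : E → EReal) : Set (E × ℝ) :=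
  {p | f p.1 ≤ p.2}

section Topology

variable {E : Type*} [TopologicalSpace E] {f : E → EReal}

theorem isClosed_epigraph (hf : LowerSemicontinuous f) : IsClosed (epigraph f) :=
  hf.isClosed_epigraph.preimage
    (continuous_fst.prodMk (continuous_coe_real_ereal.comp continuous_snd))

theorem lt_of_mem_interior_epigraph {x : E} {t : ℝ} (h : (x, t) ∈ interior (epigraph f)) :
    f x < t := by
  have hle : ∀ᶠ s : ℝ in 𝓝 t, f x ≤ s :=
    (Continuous.prodMk_right x).continuousAt.preimage_mem_nhds (mem_interior_iff_mem_nhds.1 h)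
  obtain ⟨s, hfs, hst⟩ := ((hle.filter_mono nhdsWithin_le_nhds).and
    (self_mem_nhdsWithin : ∀ᶠ s : ℝ in 𝓝[<] t, s < t)).exists
  exact hfs.trans_lt (EReal.coe_lt_coe_iff.2 hst)

end Topology

section Convexity

variable {E : Type*} [AddCommGroup E] [Module ℝ E] {f : E → EReal}

def EConvex (f : E → EReal) : Prop :=
  ∀ (x y : E) (a b : ℝ), 0 ≤ a → 0 ≤ b → a + b = 1 →
    f (a • x + b • y) ≤ (a : EReal) * f x + (b : EReal) * f y

theorem EConvex.convex_epigraph (hf : EConvex f) : Convex ℝ (epigraph f) := by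
  rintro ⟨x, t⟩ hx ⟨y, s⟩ hy a b ha hb hab
  show f (a • x + b • y) ≤ ((a * t + b * s : ℝ) : EReal)
  calc f (a • x + b • y) ≤ (a : EReal) * f x + (b : EReal) * f y := hf x y a b ha hb hab
    _ ≤ (a : EReal) * t + (b : EReal) * s :=
      add_le_add (mul_le_mul_of_nonneg_left hx (EReal.coe_nonneg.2 ha))
        (mul_le_mul_of_nonneg_left hy (EReal.coe_nonneg.2 hb))
    _ = ((a * t + b * s : ℝ) : EReal) := by norm_cast

theorem EConvex.convex_dom (hf : EConvex f) : Convex ℝ {x | f x ≠ ⊤} := by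
  have hdom : {x | f x ≠ ⊤} = LinearMap.fst ℝ E ℝ '' epigraph f := by
    ext x
    simp [epigraph, EReal.eq_top_iff_forall_lt]
  rw [hdom]
  exact hf.convex_epigraph.linear_image _

theorem EConvex.comp_linearMap_add {F : Type*} [AddCommGroup F] [Module ℝ F] (hf : EConvex f)
    (L : F →ₗ[ℝ] E) (c : E) : EConvex fun v => f (L v + c) := by
  intro v w a b ha hb hab
  dsimp only
  have hcomb : L (a • v + b • w) + c = a • (L v + c) + b • (L w + c) := by
    rw [map_add, map_smul, map_smul, smul_add, smul_add, add_add_add_comm, ← add_smul, hab,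
      one_smul]
  rw [hcomb]
  exact hf _ _ a b ha hb hab

theorem EConvex.convexOn_toReal (hf : EConvex f) (hnbot : ∀ x, f x ≠ ⊥) :
    ConvexOn ℝ {x | f x ≠ ⊤} fun x => (f x).toReal := by
  refine ⟨hf.convex_dom, fun x hx y hy a b ha hb hab => ?_⟩
  have h : f (a • x + b • y) ≤ ((a * (f x).toReal + b * (f y).toReal : ℝ) : EReal) := by
    rw [EReal.coe_add, EReal.coe_mul, EReal.coe_mul, EReal.coe_toReal hx (hnbot x),
      EReal.coe_toReal hy (hnbot y)]
    exact hf x y a b ha hb hab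
  simpa only [EReal.toReal_coe, smul_eq_mul] using
    EReal.toReal_le_toReal h (hnbot _) (EReal.coe_ne_top _)

end Convexity

theorem apply_prodMk_eq {E : Type*} [AddCommGroup E] [Module ℝ E] [TopologicalSpace E]
    (L : StrongDual ℝ (E × ℝ)) (x : E) (t : ℝ) : L (x, t) = L (x, 0) + t * L (0, 1) := by
  rw [← smul_eq_mul, ← map_smul, ← map_add, Prod.smul_mk, smul_zero, smul_eq_mul, mul_one,
    Prod.mk_add_mk, add_zero, zero_add]

section Normed

variable {E : Type*} [NormedAddCommGroup E] [NormedSpace ℝ E]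

theorem Convex.exists_dual_le_of_notMem_interior {S : Set E} (hS : Convex ℝ S) {q x : E}
    (hq : q ∈ interior S) (hx : x ∉ interior S) :
    ∃ L : StrongDual ℝ E, L q < L x ∧ ∀ a ∈ S, L a ≤ L x := by
  obtain ⟨L, hL⟩ := geometric_hahn_banach_open_point hS.interior isOpen_interior hx
  refine ⟨L, hL q hq, fun a ha => ?_⟩
  have hS_sub : S ⊆ closure (interior S) := by
    rw [hS.closure_interior_eq_closure_of_nonempty_interior ⟨q, hq⟩]
    exact subset_closure
  exact closure_minimal (fun b hb => (hL b hb).le) (isClosed_Iic.preimage L.continuous) (hS_sub ha)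

theorem intrinsicInterior_eq_image_interior {s : Set E} {p : E} (hp : p ∈ affineSpan ℝ s) :
    intrinsicInterior ℝ s = (fun v : (affineSpan ℝ s).direction => (v : E) + p) ''
      interior {v : (affineSpan ℝ s).direction | (v : E) + p ∈ s} := by
  let p' : affineSpan ℝ s := ⟨p, hp⟩
  have : Nonempty (affineSpan ℝ s) := ⟨p'⟩
  let e := (AffineIsometryEquiv.vaddConst ℝ p').toHomeomorph
  rw [intrinsicInterior, ← e.image_preimage ((↑) ⁻¹' s), ← e.image_interior, image_image]
  rfl

end Normed

section FiniteDimensional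

variable {E : Type*} [NormedAddCommGroup E] [NormedSpace ℝ E] [FiniteDimensional ℝ E]
  {f : E → EReal}

theorem EConvex.mem_interior_epigraph (hf : EConvex f) (hnbot : ∀ x, f x ≠ ⊥) {x₀ : E} {t : ℝ}
    (hx₀ : x₀ ∈ interior {x | f x ≠ ⊤}) (ht : f x₀ < t) : (x₀, t) ∈ interior (epigraph f) := by
  have hcont : ContinuousAt (fun x => (f x).toReal) x₀ :=
    (hf.convexOn_toReal hnbot).continuousOn_interior.continuousAt (isOpen_interior.mem_nhds hx₀)
  have hlt : (f x₀).toReal < t := by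
    rwa [← EReal.coe_toReal (interior_subset hx₀) (hnbot x₀), EReal.coe_lt_coe_iff] at ht
  rw [mem_interior_iff_mem_nhds]
  have hdom : ∀ᶠ p : E × ℝ in 𝓝 (x₀, t), p.1 ∈ interior {x | f x ≠ ⊤} :=
    continuous_fst.continuousAt.preimage_mem_nhds (isOpen_interior.mem_nhds hx₀)
  have hcont' : ContinuousAt (fun p : E × ℝ => (f p.1).toReal) (x₀, t) :=
    hcont.comp_of_eq continuous_fst.continuousAt rfl
  have hbelow : ∀ᶠ p : E × ℝ in 𝓝 (x₀, t), (f p.1).toReal < p.2 :=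
    hcont'.eventually_lt continuous_snd.continuousAt hlt
  filter_upwards [hdom, hbelow] with p hp hpt
  show f p.1 ≤ p.2
  rw [← EReal.coe_toReal (interior_subset hp) (hnbot _)]
  exact EReal.coe_le_coe_iff.2 hpt.le

theorem EConvex.exists_subgradient_of_mem_interior (hf : EConvex f) (hnbot : ∀ x, f x ≠ ⊥)
    {x₀ : E} (hx₀ : x₀ ∈ interior {x | f x ≠ ⊤}) :
    ∃ φ : StrongDual ℝ E, ∀ x, f x₀ + φ (x - x₀) ≤ f x := by
  set r₀ := (f x₀).toReal
  have hr₀ : f x₀ = r₀ := (EReal.coe_toReal (interior_subset hx₀) (hnbot x₀)).symm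
  obtain ⟨L, hlt, hle⟩ := Convex.exists_dual_le_of_notMem_interior hf.convex_epigraph
    (hf.mem_interior_epigraph hnbot hx₀ (t := r₀ + 1) (by rw [hr₀]; exact_mod_cast lt_add_one r₀))
    (fun h => (lt_of_mem_interior_epigraph h).ne hr₀)
  have hs : L (0, 1) < 0 := by
    rw [apply_prodMk_eq L x₀, apply_prodMk_eq L x₀ r₀] at hlt
    linarith
  refine ⟨(-L (0, 1))⁻¹ • L.comp (ContinuousLinearMap.inl ℝ E ℝ), fun x => ?_⟩
  obtain hx | hx := eq_or_ne (f x) ⊤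
  · simp [hx]
  set r := (f x).toReal
  have hr : f x = r := (EReal.coe_toReal hx (hnbot x)).symm
  have hxr := hle (x, r) hr.le
  rw [apply_prodMk_eq L x, apply_prodMk_eq L x₀] at hxr
  rw [hr₀, hr, ← EReal.coe_add, EReal.coe_le_coe_iff]
  simp only [_root_.smul_apply, ContinuousLinearMap.comp_apply,
    ContinuousLinearMap.inl_apply, smul_eq_mul]
  rw [← le_sub_iff_add_le', inv_mul_le_iff₀ (neg_pos.2 hs)]
  have : L (x - x₀, 0) = L (x, 0) - L (x₀, 0) := by
    rw [← map_sub, Prod.mk_sub_mk, sub_zero]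
  rw [this]
  linarith

theorem Convex.closure_subset_closure_intrinsicInterior {s : Set E} (hs : Convex ℝ s) :
    closure s ⊆ closure (intrinsicInterior ℝ s) := by
  rcases s.eq_empty_or_nonempty with rfl | ⟨p, hp⟩
  · simp
  have hspan := subset_affineSpan ℝ s hp
  set T := {v : (affineSpan ℝ s).direction | (v : E) + p ∈ s}
  have hT : Convex ℝ T :=
    (hs.translate_preimage_left p).linear_preimage (affineSpan ℝ s).direction.subtype
  have hTint : (interior T).Nonempty := by
    have := Set.Nonempty.intrinsicInterior hs ⟨p, hp⟩
    rwa [intrinsicInterior_eq_image_interior hspan, image_nonempty] at this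
  refine closure_minimal (fun x hx => ?_) isClosed_closure
  have hxp : x - p ∈ (affineSpan ℝ s).direction :=
    AffineSubspace.vsub_mem_direction (subset_affineSpan ℝ s hx) hspan
  rw [intrinsicInterior_eq_image_interior hspan]
  refine image_closure_subset_closure_image (by fun_prop) ⟨⟨x - p, hxp⟩, ?_, by simp⟩
  rw [hT.closure_interior_eq_closure_of_nonempty_interior hTint]
  exact subset_closure (show x - p + p ∈ s by simpa using hx)

end FiniteDimensional


section Conjugate

variable {m : ℕ} {f : (Fin m → ℝ) → EReal}

theorem exists_dotProduct_eq (φ : (Fin m → ℝ) →ₗ[ℝ] ℝ) : ∃ y, ∀ x, φ x = x ⬝ᵥ y :=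
  ⟨(dotProductEquiv ℝ (Fin m)).symm φ, fun x => by
    rw [dotProduct_comm, ← dotProductEquiv_apply_apply, LinearEquiv.apply_symm_apply]⟩

theorem le_econj (x y : Fin m → ℝ) : ((x ⬝ᵥ y : ℝ) : EReal) - f x ≤ econj f y :=
  le_iSup (fun x => ((x ⬝ᵥ y : ℝ) : EReal) - f x) x

theorem econj_ne_bot {x : Fin m → ℝ} (hx : f x ≠ ⊤) (y : Fin m → ℝ) : econj f y ≠ ⊥ := by
  refine ne_bot_of_le_ne_bot ?_ (le_econj x y)
  revert hx
  induction f x using EReal.rec <;> simp [← EReal.coe_sub]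

theorem econj_econj_le (x : Fin m → ℝ) : econj (econj f) x ≤ f x := by
  refine EReal.le_of_forall_lt_iff_le.1 fun t ht => iSup_le fun y => ?_
  calc ((y ⬝ᵥ x : ℝ) : EReal) - econj f y
      ≤ ((y ⬝ᵥ x : ℝ) : EReal) - (((x ⬝ᵥ y : ℝ) : EReal) - t) :=
        EReal.sub_le_sub le_rfl ((EReal.sub_le_sub le_rfl ht.le).trans (le_econj x y))
    _ = t := by rw [← EReal.coe_sub, ← EReal.coe_sub, dotProduct_comm]; norm_cast; ring

theorem le_econj_econj_of_affine_minorant {y : Fin m → ℝ} {c : ℝ}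
    (h : ∀ x, ((x ⬝ᵥ y + c : ℝ) : EReal) ≤ f x) (x₀ : Fin m → ℝ) :
    ((x₀ ⬝ᵥ y + c : ℝ) : EReal) ≤ econj (econj f) x₀ := by
  have hconj : econj f y ≤ ((-c : ℝ) : EReal) := iSup_le fun x =>
    calc ((x ⬝ᵥ y : ℝ) : EReal) - f x ≤ ((x ⬝ᵥ y : ℝ) : EReal) - ((x ⬝ᵥ y + c : ℝ) : EReal) :=
          EReal.sub_le_sub le_rfl (h x)
      _ = ((-c : ℝ) : EReal) := by norm_cast; ring
  calc ((x₀ ⬝ᵥ y + c : ℝ) : EReal) = ((y ⬝ᵥ x₀ : ℝ) : EReal) - ((-c : ℝ) : EReal) := by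
        rw [dotProduct_comm]; norm_cast; ring
    _ ≤ ((y ⬝ᵥ x₀ : ℝ) : EReal) - econj f y := EReal.sub_le_sub le_rfl hconj
    _ ≤ econj (econj f) x₀ := le_econj y x₀

theorem exists_separation_of_lt (hf : EConvex f) (hclosed : LowerSemicontinuous f)
    {x₀ : Fin m → ℝ} {β : ℝ} (hβ : (β : EReal) < f x₀) :
    ∃ (y : Fin m → ℝ) (s u : ℝ),
      (∀ x (t : ℝ), f x ≤ t → x ⬝ᵥ y < u + t * s) ∧ u + β * s < x₀ ⬝ᵥ y := by
  obtain ⟨L, u, hL, hu⟩ := geometric_hahn_banach_closed_point hf.convex_epigraph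
    (isClosed_epigraph hclosed) (x := (x₀, β)) (not_le.2 hβ)
  obtain ⟨y, hy⟩ := exists_dotProduct_eq (L.comp (ContinuousLinearMap.inl ℝ _ ℝ)).toLinearMap
  have hLy : ∀ x t, L (x, t) = x ⬝ᵥ y + t * L (0, 1) := fun x t => by
    rw [apply_prodMk_eq, ← hy]; rfl
  refine ⟨y, -L (0, 1), u, fun x t ht => ?_, ?_⟩
  · have := hL (x, t) ht
    rw [hLy] at this
    linarith
  · rw [hLy] at hu
    linarith

theorem separation_slope_nonneg {y : Fin m → ℝ} {s u : ℝ}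
    (hsep : ∀ x (t : ℝ), f x ≤ t → x ⬝ᵥ y < u + t * s) {x₁ : Fin m → ℝ} (hx₁ : f x₁ ≠ ⊤) :
    0 ≤ s := by
  by_contra! hs
  obtain ⟨r, hr⟩ : ∃ r : ℝ, f x₁ ≤ r := by simpa [EReal.eq_top_iff_forall_lt] using hx₁
  set t := max r ((x₁ ⬝ᵥ y - u) / s)
  have hlt := hsep x₁ t (hr.trans (EReal.coe_le_coe_iff.2 (le_max_left _ _)))
  have hts : t * s ≤ x₁ ⬝ᵥ y - u := by
    rw [← div_le_iff_of_neg hs]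
    exact le_max_right _ _
  linarith

theorem exists_affine_minorant_gt_of_slope_pos {y : Fin m → ℝ} {s u : ℝ}
    (hsep : ∀ x (t : ℝ), f x ≤ t → x ⬝ᵥ y < u + t * s) {x₀ : Fin m → ℝ} {β : ℝ}
    (hx₀ : u + β * s < x₀ ⬝ᵥ y) (hs : 0 < s) :
    ∃ (y' : Fin m → ℝ) (c : ℝ), (∀ x, ((x ⬝ᵥ y' + c : ℝ) : EReal) ≤ f x) ∧ β < x₀ ⬝ᵥ y' + c := by
  have hval : ∀ x, x ⬝ᵥ (s⁻¹ • y) + -(s⁻¹ * u) = s⁻¹ * (x ⬝ᵥ y - u) := fun x => by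
    rw [dotProduct_smul, smul_eq_mul]; ring
  refine ⟨s⁻¹ • y, -(s⁻¹ * u), fun x => ?_, ?_⟩
  · refine EReal.le_of_forall_lt_iff_le.1 fun t ht => EReal.coe_le_coe_iff.2 ?_
    rw [hval, inv_mul_le_iff₀ hs]
    linarith [hsep x t ht.le]
  · rw [hval, lt_inv_mul_iff₀ hs]
    linarith

theorem exists_affine_minorant_gt_of_ne_top (hf : EConvex f) (hclosed : LowerSemicontinuous f)
    {x₀ : Fin m → ℝ} (hx₀ : f x₀ ≠ ⊤) {β : ℝ} (hβ : (β : EReal) < f x₀) :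
    ∃ (y : Fin m → ℝ) (c : ℝ), (∀ x, ((x ⬝ᵥ y + c : ℝ) : EReal) ≤ f x) ∧ β < x₀ ⬝ᵥ y + c := by
  obtain ⟨y, s, u, hsep, hsepx₀⟩ := exists_separation_of_lt hf hclosed hβ
  -- `(x₀, f x₀)` lies in the epigraph above `(x₀, β)`, which forces a non-vertical separator.
  have hr₀ := EReal.coe_toReal hx₀ (ne_bot_of_gt hβ)
  have hβr₀ : β < (f x₀).toReal := by rwa [← hr₀, EReal.coe_lt_coe_iff] at hβ
  have hs : 0 < s := by
    have := hsep x₀ _ hr₀.ge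
    nlinarith
  exact exists_affine_minorant_gt_of_slope_pos hsep hsepx₀ hs

theorem exists_affine_minorant (hf : EConvex f) (hclosed : LowerSemicontinuous f)
    {x₁ : Fin m → ℝ} (hx₁ : f x₁ ≠ ⊤) (hx₁' : f x₁ ≠ ⊥) :
    ∃ (y : Fin m → ℝ) (c : ℝ), ∀ x, ((x ⬝ᵥ y + c : ℝ) : EReal) ≤ f x := by
  obtain ⟨β, -, hβ⟩ := EReal.lt_iff_exists_real_btwn.1 (bot_lt_iff_ne_bot.2 hx₁')
  obtain ⟨y, c, h, -⟩ := exists_affine_minorant_gt_of_ne_top hf hclosed hx₁ hβ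
  exact ⟨y, c, h⟩

theorem exists_affine_minorant_gt_of_slope_zero {y y₁ : Fin m → ℝ} {u c₁ : ℝ}
    (hsep : ∀ x (t : ℝ), f x ≤ t → x ⬝ᵥ y < u)
    (h₁ : ∀ x, ((x ⬝ᵥ y₁ + c₁ : ℝ) : EReal) ≤ f x) {x₀ : Fin m → ℝ} {β : ℝ}
    (hx₀ : u < x₀ ⬝ᵥ y) :
    ∃ (y' : Fin m → ℝ) (c : ℝ), (∀ x, ((x ⬝ᵥ y' + c : ℝ) : EReal) ≤ f x) ∧ β < x₀ ⬝ᵥ y' + c := by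
  -- tilt the minorant `(y₁, c₁)` along the vertical separator until it passes above `(x₀, β)`
  set lam := (|β - (x₀ ⬝ᵥ y₁ + c₁)| + 1) / (x₀ ⬝ᵥ y - u)
  have hlam : 0 ≤ lam := by positivity
  have hval : ∀ x, x ⬝ᵥ (y₁ + lam • y) + (c₁ - lam * u) = x ⬝ᵥ y₁ + c₁ + lam * (x ⬝ᵥ y - u) :=
    fun x => by rw [dotProduct_add, dotProduct_smul, smul_eq_mul]; ring
  refine ⟨y₁ + lam • y, c₁ - lam * u, fun x => ?_, ?_⟩
  · refine EReal.le_of_forall_lt_iff_le.1 fun t ht => ?_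
    have hx₁ := EReal.coe_le_coe_iff.1 ((h₁ x).trans ht.le)
    rw [EReal.coe_le_coe_iff, hval]
    nlinarith [hsep x t ht.le]
  · rw [hval, div_mul_cancel₀ _ (sub_pos.2 hx₀).ne']
    linarith [le_abs_self (β - (x₀ ⬝ᵥ y₁ + c₁))]

theorem exists_affine_minorant_gt (hf : EConvex f) (hclosed : LowerSemicontinuous f)
    (hnbot : ∀ x, f x ≠ ⊥) {x₁ : Fin m → ℝ} (hx₁ : f x₁ ≠ ⊤) {x₀ : Fin m → ℝ} {β : ℝ}
    (hβ : (β : EReal) < f x₀) :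
    ∃ (y : Fin m → ℝ) (c : ℝ), (∀ x, ((x ⬝ᵥ y + c : ℝ) : EReal) ≤ f x) ∧ β < x₀ ⬝ᵥ y + c := by
  obtain ⟨y, s, u, hsep, hsepx₀⟩ := exists_separation_of_lt hf hclosed hβ
  rcases (separation_slope_nonneg hsep hx₁).lt_or_eq with hs | rfl
  · exact exists_affine_minorant_gt_of_slope_pos hsep hsepx₀ hs
  · obtain ⟨y₁, c₁, h₁⟩ := exists_affine_minorant hf hclosed hx₁ (hnbot x₁)
    simp only [mul_zero, add_zero] at hsep hsepx₀
    exact exists_affine_minorant_gt_of_slope_zero hsep h₁ hsepx₀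

theorem econj_econj (hf : EConvex f) (hclosed : LowerSemicontinuous f) (hnbot : ∀ x, f x ≠ ⊥)
    (hproper : ∃ x, f x ≠ ⊤) : econj (econj f) = f := by
  obtain ⟨x₁, hx₁⟩ := hproper
  refine funext fun x₀ => le_antisymm (econj_econj_le x₀) (not_lt.1 fun hlt => ?_)
  obtain ⟨β, hβ₁, hβ₂⟩ := EReal.lt_iff_exists_real_btwn.1 hlt
  obtain ⟨y, c, hmin, hx₀⟩ := exists_affine_minorant_gt hf hclosed hnbot hx₁ hβ₂
  exact (le_econj_econj_of_affine_minorant hmin x₀).not_gt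
    (hβ₁.trans (EReal.coe_lt_coe_iff.2 hx₀))

theorem econvex_econj (hnbot : ∀ x, f x ≠ ⊥) : EConvex (econj f) := by
  intro y z a b ha hb hab
  refine iSup_le fun x => ?_
  obtain hx | hx := eq_or_ne (f x) ⊤
  · simp [hx]
  have hr := EReal.coe_toReal hx (hnbot x)
  calc ((x ⬝ᵥ (a • y + b • z) : ℝ) : EReal) - f x
      = (a : EReal) * (((x ⬝ᵥ y : ℝ) : EReal) - f x)
          + (b : EReal) * (((x ⬝ᵥ z : ℝ) : EReal) - f x) := by
        rw [← hr]
        norm_cast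
        rw [dotProduct_add, dotProduct_smul, dotProduct_smul, smul_eq_mul, smul_eq_mul]
        linear_combination (f x).toReal * hab
    _ ≤ (a : EReal) * econj f y + (b : EReal) * econj f z :=
        add_le_add (mul_le_mul_of_nonneg_left (le_econj x y) (EReal.coe_nonneg.2 ha))
          (mul_le_mul_of_nonneg_left (le_econj x z) (EReal.coe_nonneg.2 hb))

namespace ESubgrad

variable {x y : Fin m → ℝ}

theorem econj_le (h : ESubgrad f x y) : econj f y ≤ ((x ⬝ᵥ y : ℝ) : EReal) - f x := by
  refine iSup_le fun z => ?_
  have hz : f x + ((y ⬝ᵥ (z - x) : ℝ) : EReal) ≤ f z := h z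
  revert hz
  induction f x using EReal.rec with
  | bot => simp
  | top =>
    intro hz
    rw [EReal.top_add_coe, top_le_iff] at hz
    simp [hz]
  | coe r =>
    intro hz
    calc ((z ⬝ᵥ y : ℝ) : EReal) - f z ≤ ((z ⬝ᵥ y : ℝ) : EReal) - ((r + y ⬝ᵥ (z - x) : ℝ) : EReal) :=
          EReal.sub_le_sub le_rfl (by exact_mod_cast hz)
      _ = ((x ⬝ᵥ y : ℝ) : EReal) - r := by
          norm_cast
          rw [dotProduct_sub, dotProduct_comm y z, dotProduct_comm y x]
          ring

theorem econj (h : ESubgrad f x y) : ESubgrad (econj f) y x := fun w =>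
  show Soft.econj f y + ((x ⬝ᵥ (w - y) : ℝ) : EReal) ≤ Soft.econj f w from
  calc Soft.econj f y + ((x ⬝ᵥ (w - y) : ℝ) : EReal)
      ≤ (((x ⬝ᵥ y : ℝ) : EReal) - f x) + ((x ⬝ᵥ (w - y) : ℝ) : EReal) :=
        add_le_add h.econj_le le_rfl
    _ = ((x ⬝ᵥ w : ℝ) : EReal) - f x := by
        rw [sub_eq_add_neg _ (f x), sub_eq_add_neg _ (f x), add_right_comm, ← EReal.coe_add,
          dotProduct_sub, add_sub_cancel]
    _ ≤ Soft.econj f w := le_econj x w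

theorem econj_ne_top (h : ESubgrad f x y) (hx : f x ≠ ⊥) : Soft.econj f y ≠ ⊤ := by
  refine ne_top_of_le_ne_top ?_ h.econj_le
  revert hx
  induction f x using EReal.rec <;> simp [← EReal.coe_sub]

end ESubgrad

theorem exists_esubgrad_of_mem_intrinsicInterior {g : (Fin m → ℝ) → EReal} (hg : EConvex g)
    (hnbot : ∀ y, g y ≠ ⊥) {y₀ : Fin m → ℝ} (hy₀ : y₀ ∈ intrinsicInterior ℝ {y | g y ≠ ⊤}) :
    ∃ z, ESubgrad g y₀ z := by
  set V := (affineSpan ℝ {y | g y ≠ ⊤}).direction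
  have hspan : y₀ ∈ affineSpan ℝ {y | g y ≠ ⊤} :=
    subset_affineSpan ℝ _ (intrinsicInterior_subset hy₀)
  rw [intrinsicInterior_eq_image_interior hspan] at hy₀
  obtain ⟨v₀, hv₀, hv₀y₀⟩ := hy₀
  obtain rfl : v₀ = 0 := by simpa using hv₀y₀
  obtain ⟨φ, hφ⟩ := (hg.comp_linearMap_add V.subtype y₀).exists_subgradient_of_mem_interior
    (fun v => hnbot _) hv₀
  obtain ⟨ψ, hψ⟩ := LinearMap.exists_extend (φ : V →ₗ[ℝ] ℝ)
  obtain ⟨z, hz⟩ := exists_dotProduct_eq ψ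
  refine ⟨z, fun q => ?_⟩
  show g y₀ + ((z ⬝ᵥ (q - y₀) : ℝ) : EReal) ≤ g q
  obtain hq | hq := eq_or_ne (g q) ⊤
  · simp [hq]
  have hqV : q - y₀ ∈ V := AffineSubspace.vsub_mem_direction (subset_affineSpan ℝ _ hq) hspan
  have hφq : φ ⟨q - y₀, hqV⟩ = z ⬝ᵥ (q - y₀) := by
    rw [dotProduct_comm, ← hz]
    exact (LinearMap.congr_fun hψ _).symm
  simpa [hφq] using hφ ⟨q - y₀, hqV⟩

end Conjugate


/-- Let `f` be a proper closed convex function on `ℝ^m` (convex,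
nowhere `−∞`, not identically `+∞`, lower semicontinuous).  Then `∂f(ℝ^m)` is exactly the
set of points at which `f*` is subdifferentiable; in particular
`ri(dom f*) ⊆ ∂f(ℝ^m) ⊆ dom f*` and `cl ∂f(ℝ^m) = cl dom f*`. -/
theorem range_subdifferential_eq_subdifferentiability_of_conj
    (m : ℕ)
    (f : (Fin m → ℝ) → EReal)
    (hconv : ∀ (x y : Fin m → ℝ) (a b : ℝ), 0 ≤ a → 0 ≤ b → a + b = 1 →
      f (a • x + b • y) ≤ (a : EReal) * f x + (b : EReal) * f y)
    (hnbot : ∀ x, f x ≠ ⊥)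
    (hproper : ∃ x, f x ≠ ⊤)
    (hclosed : LowerSemicontinuous f) :
    (∀ y : Fin m → ℝ, (∃ x, ESubgrad f x y) ↔ ∃ z, ESubgrad (econj f) y z) ∧
    intrinsicInterior ℝ {y | econj f y ≠ ⊤} ⊆ {y | ∃ x, ESubgrad f x y} ∧
    {y | ∃ x, ESubgrad f x y} ⊆ {y | econj f y ≠ ⊤} ∧
    closure {y | ∃ x, ESubgrad f x y} = closure {y | econj f y ≠ ⊤} := by
  have hbiconj := econj_econj hconv hclosed hnbot hproper
  have hiff : ∀ y, (∃ x, ESubgrad f x y) ↔ ∃ z, ESubgrad (econj f) y z := fun y =>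
    ⟨fun ⟨x, hx⟩ => ⟨x, hx.econj⟩, fun ⟨z, hz⟩ => ⟨z, hbiconj ▸ hz.econj⟩⟩
  have hsub : {y | ∃ x, ESubgrad f x y} ⊆ {y | econj f y ≠ ⊤} :=
    fun y ⟨x, hx⟩ => hx.econj_ne_top (hnbot x)
  obtain ⟨x₁, hx₁⟩ := hproper
  have hri : intrinsicInterior ℝ {y | econj f y ≠ ⊤} ⊆ {y | ∃ x, ESubgrad f x y} := fun y hy =>
    (hiff y).2 (exists_esubgrad_of_mem_intrinsicInterior (econvex_econj hnbot)
      (econj_ne_bot hx₁) hy)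
  refine ⟨hiff, hri, hsub, (closure_mono hsub).antisymm ?_⟩
  exact (Convex.closure_subset_closure_intrinsicInterior (econvex_econj hnbot).convex_dom).trans
    (closure_mono hri)

end Soft
end

section
/- For every density point p ∈ Π_Γ, the density entropy satisfies h_Γ(p) ≤ −P*_Γ(p), where P*_Γ is the conjugate convex function of the pressure P_Γ. -/
open Filter Topology Matrix
open scoped Classical

namespace Soft

/-! Density points and the density entropy. -/

/-- `p ∈ Π_Γ`: `p` is a probability vector arising as a limiting color-frequency vector of
allowed colorings of a sequence of boxes all whose sides tend to infinity. -/
def IsDensityPoint {d n : ℕ} [NeZero n] (Γ : Fin d → Set (Fin n × Fin n))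
    (p : Fin n → ℝ) : Prop :=
  (∀ i, 0 ≤ p i) ∧ (∑ i, p i) = 1 ∧
  ∃ (mq : ℕ → Fin d → ℕ) (cq : ℕ → Fin n → ℕ),
    Tendsto mq atTop atTop ∧
    (∀ q, (∑ i, cq q i) = vol (mq q)) ∧
    (∀ q, ∃ φ ∈ Col Γ (mq q), ∀ j, cnt (mq q) φ j = cq q j) ∧
    Tendsto (fun q => fun i => (cq q i : ℝ) / (vol (mq q) : ℝ)) atTop (𝓝 p)

/-- `#C_Γ(⟨m⟩, c)`: the number of `Γ`-allowed colorings of `⟨m⟩` with color-frequency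
vector `c`. -/
noncomputable def NCol {d n : ℕ} [NeZero n] (Γ : Fin d → Set (Fin n × Fin n))
    (m : Fin d → ℕ) (c : Fin n → ℕ) : ℕ :=
  Nat.card {φ : (Fin d → ℕ) → Fin n // φ ∈ Col Γ m ∧ ∀ j, cnt m φ j = c j}

/-- The density entropy `h_Γ(p)`: the supremum, over all sequences of boxes and
color-frequency vectors converging in frequency to `p`, of the exponential growth rate
`limsup_q log #C_Γ(⟨m_q⟩,c_q) / vol(m_q)`. -/
noncomputable def densityEntropy {d n : ℕ} [NeZero n] (Γ : Fin d → Set (Fin n × Fin n))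
    (p : Fin n → ℝ) : ℝ :=
  sSup {h | ∃ (mq : ℕ → Fin d → ℕ) (cq : ℕ → Fin n → ℕ),
    Tendsto mq atTop atTop ∧
    (∀ q, (∑ i, cq q i) = vol (mq q)) ∧
    (∀ q, ∃ φ ∈ Col Γ (mq q), ∀ j, cnt (mq q) φ j = cq q j) ∧
    Tendsto (fun q => fun i => (cq q i : ℝ) / (vol (mq q) : ℝ)) atTop (𝓝 p) ∧
    h = Filter.limsup
      (fun q => Real.log (NCol Γ (mq q) (cq q)) / (vol (mq q) : ℝ)) atTop}

/-- `y` is a subgradient of `f` at `u`. -/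
def Subgrad {N : ℕ} (f : (Fin N → ℝ) → ℝ) (u y : Fin N → ℝ) : Prop :=
  ∀ z, f u + ∑ i, y i * (z i - u i) ≤ f z

/-- The conjugate convex function `f*(p) = sup_u (pᵀu − f(u))`, with values in `EReal`. -/
noncomputable def conj {N : ℕ} (f : (Fin N → ℝ) → ℝ) (p : Fin N → ℝ) : EReal :=
  ⨆ u : Fin N → ℝ, (((∑ i, p i * u i) - f u : ℝ) : EReal)

/-- The box is a finite set. -/
lemma box_finite {d : ℕ} (m : Fin d → ℕ) : (box m).Finite := by
  have hsub : box m ⊆ Set.pi Set.univ (fun i => Set.Iio (m i)) := by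
    intro x hx i _
    exact hx i
  exact (Set.Finite.pi (fun i => Set.finite_Iio _)).subset hsub

/-- The set of allowed colorings of a box is finite. -/
lemma col_finite {d n : ℕ} [NeZero n] (Γ : Fin d → Set (Fin n × Fin n)) (m : Fin d → ℕ) :
    (Col Γ m).Finite := by
  have hbox : Finite ↥(box m) := (box_finite m).to_subtype
  apply Set.Finite.of_finite_image
    (f := fun φ : (Fin d → ℕ) → Fin n => fun x : box m => φ x.1)
  · exact Set.toFinite _
  · intro φ1 h1 φ2 h2 heq
    funext x
    by_cases hx : x ∈ box m
    · exact congrFun heq ⟨x, hx⟩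
    · rw [h1.2 x hx, h2.2 x hx]

/-- Key counting estimate: `NCol · exp(cᵀu) ≤ Z`, in log form. -/
lemma log_ncol_le {d n : ℕ} [NeZero n] (Γ : Fin d → Set (Fin n × Fin n)) (m : Fin d → ℕ)
    (c : Fin n → ℕ) (u : Fin n → ℝ)
    (hφ : ∃ φ ∈ Col Γ m, ∀ j, cnt m φ j = c j) :
    Real.log (NCol Γ m c) + ∑ j, (c j : ℝ) * u j ≤ Real.log (Z Γ m u) := by
  have hfinCol : Finite ↥(Col Γ m) := (col_finite Γ m).to_subtype
  set T := {φ : (Fin d → ℕ) → Fin n // φ ∈ Col Γ m ∧ ∀ j, cnt m φ j = c j} with hT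
  have hι : Function.Injective (fun φ : T => (⟨φ.1, φ.2.1⟩ : ↥(Col Γ m))) := by
    intro a b hab
    simp only [Subtype.mk.injEq] at hab
    exact Subtype.ext hab
  have hfinT : Finite T := Finite.of_injective _ hι
  have hTne : Nonempty T := by
    obtain ⟨φ, hφ1, hφ2⟩ := hφ
    exact ⟨⟨φ, hφ1, hφ2⟩⟩
  have hNpos : 0 < NCol Γ m c := Nat.card_pos
  -- the constant sum over T
  have hsum1 : ∑' _ : T, Real.exp (∑ j, (c j : ℝ) * u j)
      = (NCol Γ m c : ℝ) * Real.exp (∑ j, (c j : ℝ) * u j) := by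
    rw [tsum_const, nsmul_eq_mul]
    rfl
  have hle : (NCol Γ m c : ℝ) * Real.exp (∑ j, (c j : ℝ) * u j) ≤ Z Γ m u := by
    rw [← hsum1]
    refine Summable.tsum_le_tsum_of_inj (fun φ : T => (⟨φ.1, φ.2.1⟩ : ↥(Col Γ m))) hι
      (fun φ _ => le_of_lt (Real.exp_pos _)) (fun φ => ?_)
      Summable.of_finite Summable.of_finite
    have : ∀ j, cnt m φ.1 j = c j := φ.2.2
    simp only [weight]
    apply le_of_eq
    congr 1
    exact Finset.sum_congr rfl (fun j _ => by rw [this j])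
  have hpos : (0 : ℝ) < (NCol Γ m c : ℝ) * Real.exp (∑ j, (c j : ℝ) * u j) := by
    have : (0 : ℝ) < (NCol Γ m c : ℝ) := by exact_mod_cast hNpos
    positivity
  calc Real.log (NCol Γ m c) + ∑ j, (c j : ℝ) * u j
      = Real.log ((NCol Γ m c : ℝ) * Real.exp (∑ j, (c j : ℝ) * u j)) := by
        rw [Real.log_mul (by exact_mod_cast hNpos.ne') (Real.exp_ne_zero _), Real.log_exp]
    _ ≤ Real.log (Z Γ m u) := Real.log_le_log hpos hle

/-- For every density point `p ∈ Π_Γ`, the density entropy satisfies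
`h_Γ(p) ≤ −P*_Γ(p)`, where `P*_Γ` is the conjugate convex function of the pressure. -/
theorem densityEntropy_le_neg_conj_pressure
    (d n : ℕ) (hd : 0 < d) [NeZero n]
    (Γ : Fin d → Set (Fin n × Fin n))
    (hne : ∃ φ : (Fin d → ℤ) → Fin n, AllowedZ Γ φ)
    (P : (Fin n → ℝ) → ℝ)
    (hP : ∀ u, Tendsto (fun m : Fin d → ℕ =>
        Real.log (Z Γ m u) / (vol m : ℝ)) atTop (𝓝 (P u))) :
    ∀ p : Fin n → ℝ, IsDensityPoint Γ p →
      ((densityEntropy Γ p : ℝ) : EReal) ≤ - conj P p := by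
  intro p hp
  obtain ⟨hp0, hp1, mq0, cq0, hmq0, hsum0, hex0, hlim0⟩ := hp
  have hmain : ∀ u : Fin n → ℝ, densityEntropy Γ p ≤ P u - ∑ j, p j * u j := by
    intro u
    unfold densityEntropy
    apply csSup_le
    · exact ⟨_, mq0, cq0, hmq0, hsum0, hex0, hlim0, rfl⟩
    · rintro x ⟨mq, cq, hmq, hsum, hex, hlim, rfl⟩
      set f : ℕ → ℝ := fun q =>
        Real.log (NCol Γ (mq q) (cq q)) / (vol (mq q) : ℝ) with hf
      set g : ℕ → ℝ := fun q =>
        Real.log (Z Γ (mq q) u) / (vol (mq q) : ℝ)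
          - ∑ j, ((cq q j : ℝ) / (vol (mq q) : ℝ)) * u j with hg
      have hNpos : ∀ q, 0 < NCol Γ (mq q) (cq q) := by
        intro q
        obtain ⟨φ, hφ1, hφ2⟩ := hex q
        have h1 : Nonempty {ψ : (Fin d → ℕ) → Fin n //
            ψ ∈ Col Γ (mq q) ∧ ∀ j, cnt (mq q) ψ j = cq q j} := ⟨⟨φ, hφ1, hφ2⟩⟩
        have h2 : Finite {ψ : (Fin d → ℕ) → Fin n //
            ψ ∈ Col Γ (mq q) ∧ ∀ j, cnt (mq q) ψ j = cq q j} := by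
          have : Finite ↥(Col Γ (mq q)) := (col_finite Γ (mq q)).to_subtype
          apply Finite.of_injective
            (fun ψ : {ψ : (Fin d → ℕ) → Fin n //
              ψ ∈ Col Γ (mq q) ∧ ∀ j, cnt (mq q) ψ j = cq q j} =>
              (⟨ψ.1, ψ.2.1⟩ : ↥(Col Γ (mq q))))
          intro a b hab
          simp only [Subtype.mk.injEq] at hab
          exact Subtype.ext hab
        exact Nat.card_pos
      have hfn : ∀ q, 0 ≤ f q := by
        intro q
        apply div_nonneg _ (Nat.cast_nonneg _)
        apply Real.log_nonneg
        exact_mod_cast hNpos q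
      have hfg : ∀ q, f q ≤ g q := by
        intro q
        have hkey := log_ncol_le Γ (mq q) (cq q) u (hex q)
        rcases Nat.eq_zero_or_pos (vol (mq q)) with hv | hv
        · simp [hf, hg, hv]
        · have hvR : (0 : ℝ) < (vol (mq q) : ℝ) := by exact_mod_cast hv
          have h1 : ∑ j, ((cq q j : ℝ) / (vol (mq q) : ℝ)) * u j
              = (∑ j, (cq q j : ℝ) * u j) / (vol (mq q) : ℝ) := by
            rw [Finset.sum_div]
            exact Finset.sum_congr rfl (fun j _ => by ring)
          simp only [hf, hg, h1]
          rw [div_sub_div_same, div_le_div_iff₀ hvR hvR]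
          nlinarith [hkey, hvR]
      have hg1 : Tendsto (fun q => Real.log (Z Γ (mq q) u) / (vol (mq q) : ℝ))
          atTop (𝓝 (P u)) := (hP u).comp hmq
      have hg2 : Tendsto (fun q => ∑ j, ((cq q j : ℝ) / (vol (mq q) : ℝ)) * u j)
          atTop (𝓝 (∑ j, p j * u j)) := by
        apply tendsto_finset_sum
        intro j _
        exact ((tendsto_pi_nhds.mp hlim) j).mul_const _
      have hgt : Tendsto g atTop (𝓝 (P u - ∑ j, p j * u j)) := hg1.sub hg2
      have hcob : IsCoboundedUnder (· ≤ ·) atTop f := by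
        have hb : IsBoundedUnder (· ≥ ·) atTop f :=
          isBoundedUnder_of ⟨0, fun q => hfn q⟩
        exact hb.isCoboundedUnder_le
      calc Filter.limsup f atTop
          ≤ Filter.limsup g atTop :=
            limsup_le_limsup (Eventually.of_forall hfg) hcob hgt.isBoundedUnder_le
        _ = P u - ∑ j, p j * u j := hgt.limsup_eq
  have hconj : conj P p ≤ ((-(densityEntropy Γ p) : ℝ) : EReal) := by
    apply iSup_le
    intro u
    rw [EReal.coe_le_coe_iff]
    have := hmain u
    linarith
  apply EReal.le_neg_of_le_neg
  rwa [← EReal.coe_neg]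

end Soft
end

section
/- The entropy h_Γ := P_Γ(0) satisfies h_Γ = max_{p ∈ Π_Γ} h_Γ(p), the maximum of the density entropy over all density points. -/
open Filter Topology Matrix
open scoped Classical

lemma Finset.exists_card_le_card_mul_card_fiber {α β : Type*} [DecidableEq β]
    {s : Finset α} {t : Finset β} {f : α → β} (hf : ∀ a ∈ s, f a ∈ t) (ht : t.Nonempty) :
    ∃ y ∈ t, s.card ≤ t.card * (s.filter fun x => f x = y).card := by
  have htpos : (0 : ℚ) < t.card := by exact_mod_cast ht.card_pos
  obtain ⟨y, hy, hle⟩ := Finset.exists_le_card_fiber_of_nsmul_le_card_of_maps_to hf ht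
    (b := (s.card : ℚ) / t.card) (by rw [nsmul_eq_mul, mul_div_cancel₀ _ htpos.ne'])
  refine ⟨y, hy, ?_⟩
  rw [div_le_iff₀' htpos] at hle
  exact_mod_cast hle

lemma Real.tendsto_log_add_one_div_atTop :
    Tendsto (fun x : ℝ => Real.log (x + 1) / x) atTop (𝓝 0) := by
  have := (Real.tendsto_pow_log_div_mul_add_atTop 1 (-1) 1 one_ne_zero).comp
    (tendsto_atTop_add_const_right atTop 1 tendsto_id)
  refine this.congr fun x => ?_
  simp

lemma Real.log_natCast_le_log_natCast {a b : ℕ} (h : a ≤ b) : Real.log a ≤ Real.log b := by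
  rcases a.eq_zero_or_pos with rfl | ha
  · simpa using Real.log_natCast_nonneg b
  · exact Real.log_le_log (by exact_mod_cast ha) (by exact_mod_cast h)

section GrowthRates

variable {A B V : ℕ → ℕ} {h : ℝ}

lemma limsup_log_div_le_of_le (hBA : ∀ q, B q ≤ A q)
    (hA : Tendsto (fun q => Real.log (A q) / V q) atTop (𝓝 h)) :
    limsup (fun q => Real.log (B q) / V q) atTop ≤ h := by
  have hle : ∀ q, Real.log (B q) / V q ≤ Real.log (A q) / V q := fun q =>
    div_le_div_of_nonneg_right (Real.log_natCast_le_log_natCast (hBA q)) (Nat.cast_nonneg _)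
  have hbdd : IsBoundedUnder (· ≥ ·) atTop fun q => Real.log (B q) / V q :=
    isBoundedUnder_of ⟨0, fun q => div_nonneg (Real.log_natCast_nonneg _) (Nat.cast_nonneg _)⟩
  calc limsup (fun q => Real.log (B q) / V q) atTop
      ≤ limsup (fun q => Real.log (A q) / V q) atTop :=
        limsup_le_limsup (Eventually.of_forall hle) hbdd.isCoboundedUnder_le hA.isBoundedUnder_le
    _ = h := hA.limsup_eq

lemma tendsto_log_div_of_le_pow_mul {k : ℕ} (hV : Tendsto V atTop atTop)
    (hA : Tendsto (fun q => Real.log (A q) / V q) atTop (𝓝 h)) (hBA : ∀ q, B q ≤ A q)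
    (hAB : ∀ q, A q ≤ (V q + 1) ^ k * B q) :
    Tendsto (fun q => Real.log (B q) / V q) atTop (𝓝 h) := by
  have hlog : ∀ q, Real.log (A q) ≤ k * Real.log (V q + 1) + Real.log (B q) := by
    intro q
    rcases (B q).eq_zero_or_pos with hB | hB
    · have : A q = 0 := by simpa [hB] using hAB q
      simp only [this, hB, Nat.cast_zero, Real.log_zero, add_zero]
      exact mul_nonneg (Nat.cast_nonneg _) (by exact_mod_cast Real.log_natCast_nonneg (V q + 1))
    · calc Real.log (A q) ≤ Real.log (((V q + 1) ^ k * B q : ℕ) : ℝ) :=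
            Real.log_natCast_le_log_natCast (hAB q)
        _ = k * Real.log (V q + 1) + Real.log (B q) := by
            push_cast
            rw [Real.log_mul (by positivity) (by positivity), Real.log_pow]
  have herr : Tendsto (fun q => k * (Real.log (V q + 1) / V q)) atTop (𝓝 0) := by
    simpa using (Real.tendsto_log_add_one_div_atTop.comp
      (tendsto_natCast_atTop_atTop.comp hV)).const_mul (k : ℝ)
  refine tendsto_of_tendsto_of_tendsto_of_le_of_le (by simpa using hA.sub herr) hA
    (fun q => ?_) fun q => ?_
  · rw [← mul_div_assoc, ← sub_div]
    exact div_le_div_of_nonneg_right (by linarith [hlog q]) (Nat.cast_nonneg _)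
  · exact div_le_div_of_nonneg_right (Real.log_natCast_le_log_natCast (hBA q)) (Nat.cast_nonneg _)

end GrowthRates

lemma div_mem_stdSimplex {ι : Type*} [Fintype ι] {c : ι → ℕ} {N : ℕ} (hc : ∑ i, c i = N)
    (hN : 0 < N) : (fun i => (c i : ℝ) / N) ∈ stdSimplex ℝ ι := by
  refine ⟨fun i => by positivity, ?_⟩
  rw [← Finset.sum_div, div_eq_one_iff_eq (by positivity)]
  exact_mod_cast hc

namespace Soft

variable {d n : ℕ}

section Box

def boxFinset (m : Fin d → ℕ) : Finset (Fin d → ℕ) :=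
  Fintype.piFinset fun i => Finset.range (m i)

@[simp]
lemma mem_boxFinset {m x : Fin d → ℕ} : x ∈ boxFinset m ↔ x ∈ box m := by
  simp [boxFinset, box]

@[simp]
lemma coe_boxFinset (m : Fin d → ℕ) : (boxFinset m : Set (Fin d → ℕ)) = box m :=
  Set.ext fun _ => mem_boxFinset

lemma card_boxFinset (m : Fin d → ℕ) : (boxFinset m).card = vol m := by
  simp [boxFinset, vol]

lemma cnt_eq_card_filter (m : Fin d → ℕ) (φ : (Fin d → ℕ) → Fin n) (j : Fin n) :
    cnt m φ j = ((boxFinset m).filter fun x => φ x = j).card := by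
  rw [cnt, ← Nat.card_eq_finsetCard]
  exact Nat.card_congr (Equiv.subtypeEquivRight fun x => by simp)

lemma sum_cnt (m : Fin d → ℕ) (φ : (Fin d → ℕ) → Fin n) : ∑ j, cnt m φ j = vol m := by
  simp_rw [cnt_eq_card_filter, ← card_boxFinset m]
  exact (Finset.card_eq_sum_card_fiberwise fun x _ => Finset.mem_univ (φ x)).symm

lemma cnt_le_vol (m : Fin d → ℕ) (φ : (Fin d → ℕ) → Fin n) (j : Fin n) : cnt m φ j ≤ vol m :=
  sum_cnt m φ ▸ Finset.single_le_sum (fun _ _ => Nat.zero_le _) (Finset.mem_univ j)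

lemma vol_const (k : ℕ) : vol (fun _ : Fin d => k) = k ^ d := by
  simp [vol]

lemma tendsto_const_pi_atTop : Tendsto (fun k : ℕ => fun _ : Fin d => k) atTop atTop :=
  tendsto_atTop_atTop.2 fun b =>
    ⟨Finset.univ.sup b, fun _ hk i => (Finset.le_sup (Finset.mem_univ i)).trans hk⟩

end Box

section Colorings

variable [NeZero n] (Γ : Fin d → Set (Fin n × Fin n)) (m : Fin d → ℕ)

lemma col_finite_s12 : (Col Γ m).Finite := by
  have : Finite (box m) := (coe_boxFinset m ▸ (boxFinset m).finite_toSet).to_subtype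
  refine Set.Finite.of_finite_image (f := (box m).domRestrict) (Set.toFinite _) ?_
  intro φ hφ ψ hψ h
  funext x
  by_cases hx : x ∈ box m
  · exact congrFun h ⟨x, hx⟩
  · rw [hφ.2 x hx, hψ.2 x hx]

lemma col_nonempty (hne : ∃ φ : (Fin d → ℤ) → Fin n, AllowedZ Γ φ) :
    (Col Γ m).Nonempty := by
  obtain ⟨φ, hφ⟩ := hne
  refine ⟨fun x => if x ∈ box m then φ (fun i => x i) else 0, fun x hx k hk => ?_,
    fun x hx => if_neg hx⟩
  have hstep :
      (fun i => (step x k i : ℤ)) = Function.update (fun i => (x i : ℤ)) k (x k + 1) := by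
    funext i
    by_cases h : i = k
    · subst h; simp [step]
    · simp [step, Function.update_of_ne h]
  simpa only [if_pos hx, if_pos hk, hstep] using hφ _ k

lemma Z_zero : Z Γ m 0 = Nat.card (Col Γ m) := by
  simp [Z, weight, tsum_const]

lemma NCol_eq_card_filter (c : Fin n → ℕ) :
    NCol Γ m c = ((col_finite_s12 Γ m).toFinset.filter fun φ => (fun j => cnt m φ j) = c).card := by
  rw [NCol, ← Nat.card_eq_finsetCard]
  exact Nat.card_congr (Equiv.subtypeEquivRight fun φ => by simp [funext_iff])

lemma NCol_le_card_col (c : Fin n → ℕ) : NCol Γ m c ≤ Nat.card (Col Γ m) :=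
  Nat.card_mono (col_finite_s12 Γ m) fun _ hφ => hφ.1

end Colorings

lemma exists_dominant_type [NeZero n] {Γ : Fin d → Set (Fin n × Fin n)} {m : Fin d → ℕ}
    (hcol : (Col Γ m).Nonempty) :
    ∃ c : Fin n → ℕ, (∃ φ ∈ Col Γ m, ∀ j, cnt m φ j = c j) ∧
      Nat.card (Col Γ m) ≤ (vol m + 1) ^ n * NCol Γ m c := by
  set s := (col_finite_s12 Γ m).toFinset
  set types := Fintype.piFinset fun _ : Fin n => Finset.range (vol m + 1)
  have hmaps : ∀ φ ∈ s, (fun j => cnt m φ j) ∈ types := fun φ _ => by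
    simpa [types, Nat.lt_succ_iff] using cnt_le_vol m φ
  obtain ⟨c, -, hc⟩ := Finset.exists_card_le_card_mul_card_fiber hmaps ⟨_, hmaps _ (by
    simpa [s] using hcol.some_mem)⟩
  have hcard : types.card = (vol m + 1) ^ n := by simp [types]
  rw [hcard, ← NCol_eq_card_filter, ← Set.ncard_eq_toFinset_card _ (col_finite_s12 Γ m),
    ← Nat.card_coe_set_eq] at hc
  have hcard_pos : 0 < Nat.card (Col Γ m) :=
    Nat.card_pos_iff.2 ⟨hcol.to_subtype, (col_finite_s12 Γ m).to_subtype⟩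
  obtain ⟨⟨φ, hφ, hφc⟩⟩ := (Nat.card_pos_iff.1 (pos_of_mul_pos_right (hcard_pos.trans_le hc)
    (Nat.zero_le _))).1
  exact ⟨c, ⟨φ, hφ, hφc⟩, hc⟩

section DensityEntropy

variable [NeZero n] {Γ : Fin d → Set (Fin n × Fin n)} {h : ℝ}

lemma limsup_log_NCol_div_vol_le
    (hent : Tendsto (fun m => Real.log (Nat.card (Col Γ m)) / vol m) atTop (𝓝 h))
    {mq : ℕ → Fin d → ℕ} (hmq : Tendsto mq atTop atTop) (cq : ℕ → Fin n → ℕ) :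
    limsup (fun q => Real.log (NCol Γ (mq q) (cq q)) / vol (mq q)) atTop ≤ h :=
  limsup_log_div_le_of_le (fun q => NCol_le_card_col Γ (mq q) (cq q)) (hent.comp hmq)

lemma densityEntropy_le
    (hent : Tendsto (fun m => Real.log (Nat.card (Col Γ m)) / vol m) atTop (𝓝 h))
    (p : Fin n → ℝ) : densityEntropy Γ p ≤ h := by
  have h0 : 0 ≤ h := ge_of_tendsto' hent fun m =>
    div_nonneg (Real.log_natCast_nonneg _) (Nat.cast_nonneg _)
  refine Real.sSup_le ?_ h0
  rintro _ ⟨mq, cq, hmq, -, -, -, rfl⟩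
  exact limsup_log_NCol_div_vol_le hent hmq cq

lemma le_densityEntropy
    (hent : Tendsto (fun m => Real.log (Nat.card (Col Γ m)) / vol m) atTop (𝓝 h))
    {p : Fin n → ℝ} {mq : ℕ → Fin d → ℕ} {cq : ℕ → Fin n → ℕ} (hmq : Tendsto mq atTop atTop)
    (hsum : ∀ q, ∑ i, cq q i = vol (mq q))
    (hwit : ∀ q, ∃ φ ∈ Col Γ (mq q), ∀ j, cnt (mq q) φ j = cq q j)
    (hfreq : Tendsto (fun q => fun i => (cq q i : ℝ) / (vol (mq q) : ℝ)) atTop (𝓝 p)) :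
    limsup (fun q => Real.log (NCol Γ (mq q) (cq q)) / vol (mq q)) atTop ≤
      densityEntropy Γ p := by
  refine le_csSup ⟨h, ?_⟩ ⟨mq, cq, hmq, hsum, hwit, hfreq, rfl⟩
  rintro _ ⟨mq', cq', hmq', -, -, -, rfl⟩
  exact limsup_log_NCol_div_vol_le hent hmq' cq'

end DensityEntropy

/-- The entropy `h_Γ = P_Γ(0)` satisfies
`h_Γ = max_{p ∈ Π_Γ} h_Γ(p)`, the maximum of the density entropy over all density
points (attained). -/
theorem entropy_eq_max_densityEntropy
    (d n : ℕ) (hd : 0 < d) [NeZero n]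
    (Γ : Fin d → Set (Fin n × Fin n))
    (hne : ∃ φ : (Fin d → ℤ) → Fin n, AllowedZ Γ φ)
    (P : (Fin n → ℝ) → ℝ)
    (hP : ∀ u, Tendsto (fun m : Fin d → ℕ =>
        Real.log (Z Γ m u) / (vol m : ℝ)) atTop (𝓝 (P u))) :
    IsGreatest {r : ℝ | ∃ p : Fin n → ℝ, IsDensityPoint Γ p ∧
      r = densityEntropy Γ p} (P 0) := by
  have hent : Tendsto (fun m => Real.log (Nat.card (Col Γ m)) / vol m) atTop (𝓝 (P 0)) := by
    simpa only [Z_zero] using hP 0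
  set cube : ℕ → Fin d → ℕ := fun q _ => q + 1
  have hcube : Tendsto cube atTop atTop :=
    tendsto_const_pi_atTop.comp (tendsto_add_atTop_nat 1)
  have hvol : ∀ q, vol (cube q) = (q + 1) ^ d := fun q => vol_const _
  choose cq hwit hdom using fun q => exists_dominant_type (col_nonempty Γ (cube q) hne)
  have hsum : ∀ q, ∑ i, cq q i = vol (cube q) := fun q => by
    obtain ⟨φ, -, hφ⟩ := hwit q
    simp only [← hφ, sum_cnt]
  have hrate : Tendsto (fun q => Real.log (NCol Γ (cube q) (cq q)) / vol (cube q)) atTop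
      (𝓝 (P 0)) := by
    refine tendsto_log_div_of_le_pow_mul ?_ (hent.comp hcube)
      (fun q => NCol_le_card_col Γ _ _) hdom
    simp only [hvol]
    exact (tendsto_pow_atTop hd.ne').comp (tendsto_add_atTop_nat 1)
  obtain ⟨p, hp, ψ, hψ, hfreq⟩ := (isCompact_stdSimplex ℝ (Fin n)).tendsto_subseq
    fun q => div_mem_stdSimplex (hsum q) (by rw [hvol]; positivity)
  have hsub := hcube.comp hψ.tendsto_atTop
  refine ⟨⟨p, ⟨hp.1, hp.2, cube ∘ ψ, cq ∘ ψ, hsub, fun _ => hsum _, fun _ => hwit _, hfreq⟩,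
    le_antisymm ?_ (densityEntropy_le hent p)⟩, ?_⟩
  · rw [← (hrate.comp hψ.tendsto_atTop).limsup_eq]
    exact le_densityEntropy hent hsub (fun _ => hsum _) (fun _ => hwit _) hfreq
  · rintro _ ⟨p', -, rfl⟩
    exact densityEntropy_le hent p'

end Soft
end
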